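/- arXiv:1110.0966 — 4 statements merged into one kernel-verified Lean document; each statement's English description precedes it below -/
import Mathlib

section
/- Let w ≥ 4 be an integer, assume |p| ≥ 3, and let D be a minimal norm representatives digit set modulo τ^w. Then D is w-subadditive. -/
open Complex

noncomputable section

/-- The lattice `ℤ[τ] = {a + b·τ : a, b ∈ ℤ}` as a subset of `ℂ`. -/
def Ztau (τ : ℂ) : Set ℂ := {z | ∃ a b : ℤ, z = (a : ℂ) + (b : ℂ) * τ}

/-- `z` is divisible by `τ` in `ℤ[τ]`. -/
def TauDvd (τ : ℂ) (z : ℂ) : Prop := ∃ y ∈ Ztau τ, z = τ * y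

/-- `x` is a minimal norm representative modulo `τ^w`: an element of `ℤ[τ]`,
not divisible by `τ`, of minimal norm in its residue class modulo `τ^w`. -/
def MinNormRep (τ : ℂ) (w : ℕ) (x : ℂ) : Prop :=
  x ∈ Ztau τ ∧ ¬ TauDvd τ x ∧
    ∀ y ∈ Ztau τ, ‖x‖ ≤ ‖x - τ ^ w * y‖

/-- `D` is a minimal norm representatives digit set modulo `τ^w`. -/
def IsMinNormDigitSet (τ : ℂ) (w : ℕ) (D : Set ℂ) : Prop :=
  D ⊆ Ztau τ ∧ (0 : ℂ) ∈ D ∧ (∀ d ∈ D, d ≠ 0 → MinNormRep τ w d) ∧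
    ∀ z ∈ Ztau τ, ¬ TauDvd τ z →
      ∃! d, d ∈ D ∧ ∃ y ∈ Ztau τ, z - d = τ ^ w * y

/-- An expansion: a finitely supported sequence of digits. -/
def IsExpansion (D : Set ℂ) (η : ℕ →₀ ℂ) : Prop := ∀ n, η n ∈ D

/-- The `w`-NAF condition: any two distinct nonzero digits have indices at
distance at least `w`. -/
def IsWNAF (w : ℕ) (η : ℕ →₀ ℂ) : Prop :=
  ∀ m n : ℕ, m ≠ n → η m ≠ 0 → η n ≠ 0 → (w : ℤ) ≤ |(m : ℤ) - (n : ℤ)|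

/-- The value of an expansion in base `τ`: `∑ η_n · τ^n`. -/
def evalue (τ : ℂ) (η : ℕ →₀ ℂ) : ℂ := η.sum fun n d => d * τ ^ n

/-- The weight of an expansion: the number of nonzero digits. -/
def eweight (η : ℕ →₀ ℂ) : ℕ := η.support.card

/-- A multi-expansion over the digit set `D`: a finite multiset of pairs
`(d, n)` with `d ∈ D` nonzero. -/
def IsMultiExpansion (D : Set ℂ) (μ : Multiset (ℂ × ℕ)) : Prop :=
  ∀ x ∈ μ, x.1 ∈ D ∧ x.1 ≠ 0

/-- The value of a multi-expansion in base `τ`: `∑ d · τ^n`. -/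
def mvalue (τ : ℂ) (μ : Multiset (ℂ × ℕ)) : ℂ :=
  (μ.map fun x => x.1 * τ ^ x.2).sum

/-- The digit set `D` is `w`-subadditive: the sum of the values of two
singletons has a `w`-NAF-expansion of weight at most `2`. -/
def WSubadditive (τ : ℂ) (w : ℕ) (D : Set ℂ) : Prop :=
  ∀ c ∈ D, ∀ d ∈ D, c ≠ 0 → d ≠ 0 → ∀ m n : ℕ,
    ∃ η : ℕ →₀ ℂ, IsExpansion D η ∧ IsWNAF w η ∧
      evalue τ η = τ ^ m * c + τ ^ n * d ∧ eweight η ≤ 2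

/-
Write `A = ‖τ‖ = √q` and let `ρ` be a covering radius of the lattice `ℤ[τ]`. Minimality gives
`‖d‖ ≤ ρ A^w` for every digit, and for `|p| ≥ 3` one may take `ρ² = (3q - 5)/12`, which makes
`2ρ(A³ + 2) < A⁴`. Given `τ^m c + τ^n d` with `n ≤ m`, either `m - n ≥ w` and this is already a
`w`-NAF, or `z = τ^(m-n) c + d` has `‖z‖ ≤ ρ A^w (A^(w-1) + 1)`. Write `z = τ^j u` with `τ ∤ u`
and `u = e + τ^w y` with `e` the digit of `u`; then `y = τ^i v` with `τ ∤ v` and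
`‖v‖ ≤ (‖z‖ + ρ A^w) / A^w < A^w / 2`, which forces `v` to be a digit itself. Hence
`z = τ^j e + τ^(j+w+i) v`.
-/

section Lattice

variable {p q : ℤ} {τ : ℂ}

lemma add_mem_Ztau {z z' : ℂ} (hz : z ∈ Ztau τ) (hz' : z' ∈ Ztau τ) : z + z' ∈ Ztau τ := by
  obtain ⟨a, b, rfl⟩ := hz
  obtain ⟨a', b', rfl⟩ := hz'
  exact ⟨a + a', b + b', by push_cast; ring⟩

lemma neg_mem_Ztau {z : ℂ} (hz : z ∈ Ztau τ) : -z ∈ Ztau τ := by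
  obtain ⟨a, b, rfl⟩ := hz
  exact ⟨-a, -b, by push_cast; ring⟩

lemma mul_mem_Ztau_of_root (hroot : τ ^ 2 - p * τ + q = 0) {z : ℂ} (hz : z ∈ Ztau τ) :
    τ * z ∈ Ztau τ := by
  obtain ⟨a, b, rfl⟩ := hz
  exact ⟨-q * b, a + p * b, by push_cast; linear_combination (b : ℂ) * hroot⟩

lemma pow_mul_mem_Ztau_of_root (hroot : τ ^ 2 - p * τ + q = 0) (k : ℕ) {z : ℂ}
    (hz : z ∈ Ztau τ) : τ ^ k * z ∈ Ztau τ := by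
  induction k with
  | zero => simpa using hz
  | succ k ih => simpa [pow_succ', mul_assoc] using mul_mem_Ztau_of_root hroot ih

lemma re_eq_and_im_sq_eq_of_root (hroot : τ ^ 2 - p * τ + q = 0) (him : τ.im ≠ 0) :
    τ.re = p / 2 ∧ τ.im ^ 2 = q - p ^ 2 / 4 := by
  have hre := congrArg Complex.re hroot
  have him' := congrArg Complex.im hroot
  simp only [sq, mul_re, mul_im, sub_re, sub_im, add_re, add_im, intCast_re, intCast_im,
    zero_re, zero_im] at hre him'
  have h2 : 2 * τ.re = p := by
    have : τ.im * (2 * τ.re - p) = 0 := by linear_combination him'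
    linarith [(mul_eq_zero.1 this).resolve_left him]
  constructor <;> nlinarith

lemma sq_lt_four_mul_of_im_ne_zero (him2 : τ.im ^ 2 = q - p ^ 2 / 4) (him : τ.im ≠ 0) :
    p ^ 2 < 4 * q := by
  have : (p : ℝ) ^ 2 < 4 * q := by nlinarith [sq_pos_of_ne_zero him]
  exact_mod_cast this

lemma normSq_intCast_add_intCast_mul (hre : τ.re = p / 2) (him2 : τ.im ^ 2 = q - p ^ 2 / 4)
    (a b : ℤ) : normSq (a + b * τ) = ((a ^ 2 + a * b * p + b ^ 2 * q : ℤ) : ℝ) := by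
  simp only [normSq_apply, add_re, add_im, mul_re, mul_im, intCast_re, intCast_im, hre]
  push_cast
  linear_combination (b : ℝ) ^ 2 * him2

lemma normSq_eq_of_re_of_im_sq (hre : τ.re = p / 2) (him2 : τ.im ^ 2 = q - p ^ 2 / 4) :
    normSq τ = q := by
  simpa using normSq_intCast_add_intCast_mul hre him2 0 1

lemma one_le_normSq_of_mem_Ztau (hre : τ.re = p / 2) (him2 : τ.im ^ 2 = q - p ^ 2 / 4)
    {z : ℂ} (hz : z ∈ Ztau τ) (hz0 : z ≠ 0) : 1 ≤ normSq z := by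
  obtain ⟨a, b, rfl⟩ := hz
  have hpos := normSq_pos.2 hz0
  rw [normSq_intCast_add_intCast_mul hre him2] at hpos ⊢
  exact_mod_cast (Int.cast_pos.1 hpos : (0 : ℤ) < _)

lemma one_le_norm_of_mem_Ztau (hre : τ.re = p / 2) (him2 : τ.im ^ 2 = q - p ^ 2 / 4)
    {z : ℂ} (hz : z ∈ Ztau τ) (hz0 : z ≠ 0) : 1 ≤ ‖z‖ := by
  have h := one_le_normSq_of_mem_Ztau hre him2 hz hz0
  rw [← Complex.sq_norm] at h
  nlinarith [norm_nonneg z]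

lemma one_le_norm_of_re_of_im_sq (hre : τ.re = p / 2) (him2 : τ.im ^ 2 = q - p ^ 2 / 4)
    (hq : 1 ≤ q) : 1 ≤ ‖τ‖ := by
  have : (1 : ℝ) ≤ ‖τ‖ ^ 2 := by
    rw [Complex.sq_norm, normSq_eq_of_re_of_im_sq hre him2]
    exact_mod_cast hq
  nlinarith [norm_nonneg τ]

lemma three_le_of_three_le_abs (him2 : τ.im ^ 2 = q - p ^ 2 / 4) (him : τ.im ≠ 0)
    (hp : 3 ≤ |p|) : 3 ≤ q := by
  have := sq_lt_four_mul_of_im_ne_zero him2 him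
  nlinarith [sq_abs p]

lemma exists_eq_pow_mul_not_tauDvd (hre : τ.re = p / 2) (him2 : τ.im ^ 2 = q - p ^ 2 / 4)
    (hq : 2 ≤ q) {z : ℂ} (hz : z ∈ Ztau τ) (hz0 : z ≠ 0) :
    ∃ (j : ℕ) (u : ℂ), u ∈ Ztau τ ∧ ¬ TauDvd τ u ∧ z = τ ^ j * u := by
  obtain ⟨n, hn⟩ := exists_nat_ge (normSq z)
  induction n generalizing z with
  | zero =>
    have := one_le_normSq_of_mem_Ztau hre him2 hz hz0
    norm_num at hn
    linarith
  | succ n ih =>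
    by_cases hdvd : TauDvd τ z
    · obtain ⟨u, hu, rfl⟩ := hdvd
      have hu0 : u ≠ 0 := right_ne_zero_of_mul hz0
      have hu1 := one_le_normSq_of_mem_Ztau hre him2 hu hu0
      have hqr : (2 : ℝ) ≤ q := by exact_mod_cast hq
      have hun : normSq u ≤ n := by
        rw [normSq_mul, normSq_eq_of_re_of_im_sq hre him2] at hn
        push_cast at hn
        nlinarith
      obtain ⟨j, v, hv, hvd, rfl⟩ := ih hu hu0 hun
      exact ⟨j + 1, v, hv, hvd, by ring⟩
    · exact ⟨0, z, hz, hdvd, by simp⟩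

end Lattice

section Covering

variable {p q : ℤ} {τ : ℂ}

lemma normSq_sub_intCast_add_intCast_mul (ζ : ℂ) (a b : ℤ) :
    normSq (ζ - (a + b * τ)) = (ζ.re - a - b * τ.re) ^ 2 + (ζ.im - b * τ.im) ^ 2 := by
  simp only [normSq_apply, sub_re, sub_im, add_re, add_im, mul_re, mul_im, intCast_re,
    intCast_im]
  ring

lemma sq_sub_round_le (x : ℝ) : (x - round x) ^ 2 ≤ 1 / 4 := by
  have := abs_sub_round x
  rw [← sq_abs]
  nlinarith [abs_nonneg (x - round x)]

lemma exists_normSq_sub_le_rectangle (him : τ.im ≠ 0) (ζ : ℂ) :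
    ∃ g ∈ Ztau τ, normSq (ζ - g) ≤ (1 + τ.im ^ 2) / 4 := by
  set b := round (ζ.im / τ.im)
  set a := round (ζ.re - b * τ.re)
  refine ⟨a + b * τ, ⟨a, b, rfl⟩, ?_⟩
  have hb := sq_sub_round_le (ζ.im / τ.im)
  have ha := sq_sub_round_le (ζ.re - b * τ.re)
  have him' : ζ.im - b * τ.im = (ζ.im / τ.im - b) * τ.im := by field_simp
  rw [normSq_sub_intCast_add_intCast_mul, him', mul_pow, sub_right_comm]
  nlinarith [sq_nonneg τ.im]

lemma exists_sq_sub_intCast_eq (x : ℝ) : ∃ a a' : ℤ, ∃ h : ℝ, 0 ≤ h ∧ h ≤ 1 / 2 ∧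
    (x - a) ^ 2 = h ^ 2 ∧ (x - a' - 1 / 2) ^ 2 = (1 / 2 - h) ^ 2 := by
  have h0 := Int.fract_nonneg x
  have h1 := Int.fract_lt_one x
  rcases le_or_gt (Int.fract x) (1 / 2) with hx | hx
  · exact ⟨⌊x⌋, ⌊x⌋, Int.fract x, h0, hx, by rw [Int.fract], by rw [Int.fract]; ring⟩
  · exact ⟨⌊x⌋ + 1, ⌊x⌋, 1 - Int.fract x, by linarith, by linarith,
      by push_cast; rw [Int.fract]; ring, by rw [Int.fract]; ring⟩

lemma sq_add_four_mul_mul_sq_le {h t Y : ℝ} (h0 : 0 ≤ h) (h1 : h ≤ 1 / 2) (ht : 0 ≤ t)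
    (hY : 0 ≤ Y) (hht : h + t ≤ Y + 1 / 4) : t ^ 2 + 4 * Y * h ^ 2 ≤ (Y + 1 / 4) ^ 2 := by
  nlinarith [mul_le_mul_of_nonneg_left (by linarith : 0 ≤ 1 / 2 - h) (mul_nonneg h0 hY)]

/-- With `Y = (Im τ)²`, `(Y + 1/4)² / (4Y)` is the squared circumradius of the triangle
`0, 1, τ - r`. -/
lemma exists_four_mul_normSq_sub_le_hexagonal (r : ℤ) (hre : τ.re = r + 1 / 2)
    (him : τ.im ≠ 0) (ζ : ℂ) :
    ∃ g ∈ Ztau τ, 4 * τ.im ^ 2 * normSq (ζ - g) ≤ (τ.im ^ 2 + 1 / 4) ^ 2 := by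
  set Y := τ.im ^ 2
  set b := ⌊ζ.im / τ.im⌋
  set θ := Int.fract (ζ.im / τ.im)
  have hθ0 := Int.fract_nonneg (ζ.im / τ.im)
  have hθ1 := (Int.fract_lt_one (ζ.im / τ.im)).le
  have hY : 0 ≤ Y := sq_nonneg _
  have him₀ : ζ.im - b * τ.im = θ * τ.im := by simp only [θ, b, Int.fract]; field_simp
  obtain ⟨a, a', h, h0, h1, ha, ha'⟩ := exists_sq_sub_intCast_eq (ζ.re - b * τ.re)
  rcases le_or_gt (h + 2 * θ * Y) (Y + 1 / 4) with hh | hh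
  · refine ⟨a + b * τ, ⟨a, b, rfl⟩, ?_⟩
    have hbound := sq_add_four_mul_mul_sq_le h0 h1 (by positivity) hY hh
    rw [normSq_sub_intCast_add_intCast_mul, him₀, sub_right_comm, ha]
    nlinarith
  · refine ⟨(a' - r : ℤ) + (b + 1 : ℤ) * τ, ⟨a' - r, b + 1, rfl⟩, ?_⟩
    have hbound := sq_add_four_mul_mul_sq_le (h := 1 / 2 - h) (t := 2 * (1 - θ) * Y)
      (by linarith) (by linarith) (by nlinarith) hY (by linarith)
    have hre₁ : ζ.re - ((a' - r : ℤ) : ℝ) - ((b + 1 : ℤ) : ℝ) * τ.re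
        = ζ.re - b * τ.re - a' - 1 / 2 := by
      rw [hre]; push_cast; ring
    have him₁ : ζ.im - ((b + 1 : ℤ) : ℝ) * τ.im = (θ - 1) * τ.im := by
      push_cast; linear_combination him₀
    rw [normSq_sub_intCast_add_intCast_mul, hre₁, him₁, ha']
    nlinarith

lemma exists_normSq_sub_le_of_three_le_abs (hre : τ.re = p / 2)
    (him2 : τ.im ^ 2 = q - p ^ 2 / 4) (him : τ.im ≠ 0) (hp : 3 ≤ |p|) (ζ : ℂ) :
    ∃ g ∈ Ztau τ, normSq (ζ - g) ≤ (3 * q - 5) / 12 := by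
  rcases Int.even_or_odd' p with ⟨r, rfl | rfl⟩
  · have hr : 4 * 4 ≤ (2 * r) ^ 2 := by
      rw [abs_mul, abs_two] at hp
      have : 2 ≤ |r| := by omega
      rw [mul_pow, ← sq_abs r]
      nlinarith
    have hr' : (16 : ℝ) ≤ ((2 * r : ℤ) : ℝ) ^ 2 := by exact_mod_cast hr
    obtain ⟨g, hg, hle⟩ := exists_normSq_sub_le_rectangle him ζ
    exact ⟨g, hg, by linarith⟩
  · have hr : 9 ≤ (2 * r + 1) ^ 2 := by
      rw [← sq_abs]
      nlinarith
    have hY : 3 ≤ 4 * q - (2 * r + 1) ^ 2 := by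
      have := sq_lt_four_mul_of_im_ne_zero him2 him
      have : (2 * r + 1) ^ 2 = 4 * (r ^ 2 + r) + 1 := by ring
      omega
    have hr' : (9 : ℝ) ≤ ((2 * r + 1 : ℤ) : ℝ) ^ 2 := by exact_mod_cast hr
    have hY' : (3 : ℝ) ≤ 4 * q - ((2 * r + 1 : ℤ) : ℝ) ^ 2 := by exact_mod_cast hY
    have hre' : τ.re = r + 1 / 2 := by rw [hre]; push_cast; ring
    obtain ⟨g, hg, hle⟩ := exists_four_mul_normSq_sub_le_hexagonal r hre' him ζ
    refine ⟨g, hg, ?_⟩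
    rw [him2] at hle
    set Y : ℝ := q - ((2 * r + 1 : ℤ) : ℝ) ^ 2 / 4
    have hY₀ : 3 / 4 ≤ Y := by simp only [Y]; linarith
    have hY₁ : Y ≤ q - 9 / 4 := by simp only [Y]; linarith
    -- the left side is convex in `Y`, so it suffices to compare at `Y = 3/4` and `Y = q - 9/4`
    have hYq : 3 * (Y + 1 / 4) ^ 2 ≤ Y * (3 * q - 5) := by
      nlinarith [mul_nonneg (by linarith : 0 ≤ Y - 3 / 4) (by linarith : 0 ≤ q - 9 / 4 - Y)]
    nlinarith

lemma two_mul_mul_pow_three_add_two_lt {A ρ : ℝ} (hA : 0 < A)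
    (hρ : ρ ^ 2 = (3 * A ^ 2 - 5) / 12) : 2 * ρ * (A ^ 3 + 2) < A ^ 4 := by
  refine lt_of_pow_lt_pow_left₀ 2 (by positivity) ?_
  calc (2 * ρ * (A ^ 3 + 2)) ^ 2 = (3 * A ^ 2 - 5) / 3 * (A ^ 3 + 2) ^ 2 := by
        rw [mul_pow, mul_pow, hρ]; ring
    _ < (A ^ 4) ^ 2 := by
      nlinarith [pow_pos hA 3, pow_pos hA 4, sq_nonneg (A ^ 3 - 6 / 5 * A ^ 2),
        sq_nonneg (A - 2), sq_nonneg (A ^ 2 - 2 * A)]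

lemma exists_coveringRadius (hre : τ.re = p / 2)
    (him2 : τ.im ^ 2 = q - p ^ 2 / 4) (him : τ.im ≠ 0) (hp : 3 ≤ |p|) :
    ∃ ρ : ℝ, 0 ≤ ρ ∧ (∀ ζ : ℂ, ∃ g ∈ Ztau τ, ‖ζ - g‖ ≤ ρ) ∧
      2 * ρ * (‖τ‖ ^ 3 + 2) < ‖τ‖ ^ 4 := by
  have hq : (3 : ℝ) ≤ q := by exact_mod_cast three_le_of_three_le_abs him2 him hp
  have hA : ‖τ‖ ^ 2 = q := by rw [Complex.sq_norm, normSq_eq_of_re_of_im_sq hre him2]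
  refine ⟨√((3 * q - 5) / 12), Real.sqrt_nonneg _, fun ζ => ?_, ?_⟩
  · obtain ⟨g, hg, hle⟩ := exists_normSq_sub_le_of_three_le_abs hre him2 him hp ζ
    exact ⟨g, hg, Real.sqrt_le_sqrt hle⟩
  · refine two_mul_mul_pow_three_add_two_lt (norm_pos_iff.2 fun h => him (by simp [h])) ?_
    rw [Real.sq_sqrt (by linarith), hA]

lemma two_mul_mul_pow_add_two_lt {A ρ : ℝ} (hA : 1 ≤ A) (hρ0 : 0 ≤ ρ)
    (h : 2 * ρ * (A ^ 3 + 2) < A ^ 4) {k w : ℕ} (hk : k < w) (hw : 4 ≤ w) :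
    2 * ρ * (A ^ k + 2) < A ^ w := by
  obtain ⟨l, rfl⟩ : ∃ l, w = l + 4 := ⟨w - 4, by omega⟩
  have hAk : A ^ k ≤ A ^ l * A ^ 3 := by
    rw [← pow_add]; exact pow_le_pow_right₀ hA (by omega)
  have hAl : 1 ≤ A ^ l := one_le_pow₀ hA
  calc 2 * ρ * (A ^ k + 2) ≤ A ^ l * (2 * ρ * (A ^ 3 + 2)) := by nlinarith
    _ < A ^ l * A ^ 4 := by gcongr
    _ = A ^ (l + 4) := by ring

end Covering

def HasWNAFWeightLeTwo (τ : ℂ) (w : ℕ) (D : Set ℂ) (z : ℂ) : Prop :=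
  ∃ η : ℕ →₀ ℂ, IsExpansion D η ∧ IsWNAF w η ∧ evalue τ η = z ∧ eweight η ≤ 2

section Expansions

variable {τ : ℂ} {w : ℕ} {D : Set ℂ}

lemma hasWNAFWeightLeTwo_pow_mul_add_pow_mul (hw : 0 < w) (hD0 : (0 : ℂ) ∈ D) {e f : ℂ}
    (he : e ∈ D) (hf : f ∈ D) {a b : ℕ} (hab : a + w ≤ b) :
    HasWNAFWeightLeTwo τ w D (τ ^ a * e + τ ^ b * f) := by
  have hba : b ≠ a := by omega
  set η := Finsupp.single a e + Finsupp.single b f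
  have hη : ∀ k, η k = (if a = k then e else 0) + (if b = k then f else 0) := fun k => by
    simp only [η, Finsupp.add_apply, Finsupp.single_apply]
  have hsupp : ∀ k, η k ≠ 0 → k = a ∨ k = b := fun k hk => by
    by_contra! h
    simp [hη, h.1.symm, h.2.symm] at hk
  refine ⟨η, fun k => ?_, fun m n hmn hm hn => ?_, ?_, ?_⟩
  · rcases eq_or_ne a k with rfl | hak
    · simpa [hη, hba] using he
    · rcases eq_or_ne b k with rfl | hbk
      · simpa [hη, hak] using hf
      · simpa [hη, hak, hbk] using hD0
  · rcases hsupp m hm with rfl | rfl <;> rcases hsupp n hn with rfl | rfl <;>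
      first
      | exact absurd rfl hmn
      | exact le_abs.2 (.inl (by omega))
      | exact le_abs.2 (.inr (by omega))
  · simp only [evalue, η]
    rw [Finsupp.sum_add_index' (fun _ => zero_mul _) (fun _ _ _ => add_mul _ _ _),
      Finsupp.sum_single_index (zero_mul _), Finsupp.sum_single_index (zero_mul _)]
    ring
  · calc eweight η ≤ ({a, b} : Finset ℕ).card :=
          Finset.card_le_card fun k hk => by
            rcases hsupp k (Finsupp.mem_support_iff.1 hk) with rfl | rfl <;> simp
      _ ≤ 2 := Finset.card_le_two

lemma hasWNAFWeightLeTwo_pow_mul (hw : 0 < w) (hD0 : (0 : ℂ) ∈ D) {e : ℂ} (he : e ∈ D)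
    (a : ℕ) : HasWNAFWeightLeTwo τ w D (τ ^ a * e) := by
  simpa using hasWNAFWeightLeTwo_pow_mul_add_pow_mul (τ := τ) hw hD0 he hD0 le_rfl

lemma HasWNAFWeightLeTwo.pow_mul (hD0 : (0 : ℂ) ∈ D) {z : ℂ} (hz : HasWNAFWeightLeTwo τ w D z)
    (n : ℕ) : HasWNAFWeightLeTwo τ w D (τ ^ n * z) := by
  obtain ⟨η, hexp, hnaf, rfl, hwt⟩ := hz
  set f := addLeftEmbedding n
  have hshift : ∀ k, η.embDomain f k ≠ 0 → ∃ l, n + l = k ∧ η.embDomain f k = η l := by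
    intro k hk
    by_cases hkf : k ∈ Set.range f
    · obtain ⟨l, rfl⟩ := hkf
      exact ⟨l, rfl, Finsupp.embDomain_apply_self f η l⟩
    · exact absurd (Finsupp.embDomain_of_notMem_range f η k hkf) hk
  refine ⟨η.embDomain f, fun k => ?_, fun k k' hkk' hk hk' => ?_, ?_, ?_⟩
  · by_cases hk : η.embDomain f k = 0
    · rw [hk]; exact hD0
    · obtain ⟨l, -, hl⟩ := hshift k hk
      rw [hl]; exact hexp l
  · obtain ⟨l, rfl, hl⟩ := hshift k hk
    obtain ⟨l', rfl, hl'⟩ := hshift k' hk'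
    have := hnaf l l' (by omega) (hl ▸ hk) (hl' ▸ hk')
    push_cast
    rwa [add_sub_add_left_eq_sub]
  · simp only [evalue, Finsupp.sum_embDomain, Finsupp.mul_sum]
    refine Finset.sum_congr rfl fun k _ => ?_
    simp only [f, addLeftEmbedding_apply]
    ring
  · simpa [eweight, Finsupp.support_embDomain] using hwt

end Expansions

lemma norm_le_norm_pow_mul {τ : ℂ} (hτ : 1 ≤ ‖τ‖) (k : ℕ) (u : ℂ) : ‖u‖ ≤ ‖τ ^ k * u‖ := by
  rw [norm_mul, norm_pow]
  exact le_mul_of_one_le_left (norm_nonneg u) (one_le_pow₀ hτ)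

namespace IsMinNormDigitSet

variable {p q : ℤ} {τ : ℂ} {w : ℕ} {D : Set ℂ}

lemma norm_le (hτ : τ ≠ 0) {ρ : ℝ} (hcov : ∀ ζ : ℂ, ∃ g ∈ Ztau τ, ‖ζ - g‖ ≤ ρ)
    (hD : IsMinNormDigitSet τ w D) {d : ℂ} (hd : d ∈ D) : ‖d‖ ≤ ρ * ‖τ‖ ^ w := by
  obtain ⟨g, hg, hle⟩ := hcov (d / τ ^ w)
  obtain rfl | hd0 := eq_or_ne d 0
  · simpa using mul_nonneg ((norm_nonneg _).trans hle) (pow_nonneg (norm_nonneg τ) w)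
  calc ‖d‖ ≤ ‖d - τ ^ w * g‖ := (hD.2.2.1 d hd hd0).2.2 g hg
    _ = ‖τ‖ ^ w * ‖d / τ ^ w - g‖ := by
      rw [← norm_pow, ← norm_mul, mul_sub, mul_div_cancel₀ _ (pow_ne_zero _ hτ)]
    _ ≤ ρ * ‖τ‖ ^ w := by rw [mul_comm]; gcongr

lemma exists_mem_eq_add (hroot : τ ^ 2 - p * τ + q = 0) (hw : 0 < w)
    (hD : IsMinNormDigitSet τ w D) {z : ℂ} (hz : z ∈ Ztau τ) (hnd : ¬ TauDvd τ z) :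
    ∃ e ∈ D, e ≠ 0 ∧ ‖e‖ ≤ ‖z‖ ∧ ∃ y ∈ Ztau τ, z = e + τ ^ w * y := by
  obtain ⟨e, ⟨he, y, hy, hzy⟩, -⟩ := hD.2.2.2 z hz hnd
  have he0 : e ≠ 0 := by
    rintro rfl
    refine hnd ⟨τ ^ (w - 1) * y, pow_mul_mem_Ztau_of_root hroot _ hy, ?_⟩
    rw [← mul_assoc, ← pow_succ', Nat.sub_add_cancel hw]
    linear_combination hzy
  refine ⟨e, he, he0, ?_, y, hy, by linear_combination hzy⟩
  calc ‖e‖ ≤ ‖e - τ ^ w * -y‖ := (hD.2.2.1 e he he0).2.2 _ (neg_mem_Ztau hy)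
    _ = ‖z‖ := by congr 1; linear_combination -hzy

lemma mem_of_two_mul_norm_lt (hroot : τ ^ 2 - p * τ + q = 0) (hre : τ.re = p / 2)
    (him2 : τ.im ^ 2 = q - p ^ 2 / 4) (hw : 0 < w) (hD : IsMinNormDigitSet τ w D) {v : ℂ}
    (hv : v ∈ Ztau τ) (hnd : ¬ TauDvd τ v) (hlt : 2 * ‖v‖ < ‖τ‖ ^ w) : v ∈ D := by
  obtain ⟨f, hf, -, hfv, y, hy, rfl⟩ := hD.exists_mem_eq_add hroot hw hv hnd
  obtain rfl | hy0 := eq_or_ne y 0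
  · simpa using hf
  have hy1 := one_le_norm_of_mem_Ztau hre him2 hy hy0
  have : ‖τ‖ ^ w * ‖y‖ ≤ ‖f + τ ^ w * y‖ + ‖f‖ := by
    rw [← norm_pow, ← norm_mul]
    simpa using norm_sub_le (f + τ ^ w * y) f
  nlinarith [pow_nonneg (norm_nonneg τ) w]

lemma hasWNAFWeightLeTwo_of_norm_add_lt (hroot : τ ^ 2 - p * τ + q = 0)
    (hre : τ.re = p / 2) (him2 : τ.im ^ 2 = q - p ^ 2 / 4) (hq : 2 ≤ q) (hw : 0 < w)
    (hD : IsMinNormDigitSet τ w D) {R : ℝ} (hR : ∀ d ∈ D, ‖d‖ ≤ R) {z : ℂ} (hz : z ∈ Ztau τ)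
    (hzR : 2 * (‖z‖ + R) < ‖τ‖ ^ w * ‖τ‖ ^ w) : HasWNAFWeightLeTwo τ w D z := by
  have hD0 := hD.2.1
  have hτ := one_le_norm_of_re_of_im_sq hre him2 (by omega)
  obtain rfl | hz0 := eq_or_ne z 0
  · simpa using hasWNAFWeightLeTwo_pow_mul (τ := τ) hw hD0 hD0 0
  obtain ⟨j, u, hu, hund, rfl⟩ := exists_eq_pow_mul_not_tauDvd hre him2 hq hz hz0
  obtain ⟨e, he, -, heu, y, hy, rfl⟩ := hD.exists_mem_eq_add hroot hw hu hund
  obtain rfl | hy0 := eq_or_ne y 0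
  · simpa using hasWNAFWeightLeTwo_pow_mul hw hD0 he j
  obtain ⟨i, v, hv, hvnd, rfl⟩ := exists_eq_pow_mul_not_tauDvd hre him2 hq hy hy0
  have hvD : v ∈ D := by
    refine hD.mem_of_two_mul_norm_lt hroot hre him2 hw hv hvnd ?_
    have : ‖τ‖ ^ w * ‖v‖ ≤ ‖τ ^ j * (e + τ ^ w * (τ ^ i * v))‖ + R := calc
      ‖τ‖ ^ w * ‖v‖ ≤ ‖τ‖ ^ w * ‖τ ^ i * v‖ := by gcongr; exact norm_le_norm_pow_mul hτ i v
      _ = ‖(e + τ ^ w * (τ ^ i * v)) - e‖ := by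
        rw [add_sub_cancel_left, norm_mul (τ ^ w), norm_pow]
      _ ≤ ‖e + τ ^ w * (τ ^ i * v)‖ + ‖e‖ := norm_sub_le _ _
      _ ≤ ‖τ ^ j * (e + τ ^ w * (τ ^ i * v))‖ + R := by
        gcongr
        · exact norm_le_norm_pow_mul hτ j _
        · exact hR e he
    nlinarith [pow_pos (one_pos.trans_le hτ) w]
  convert hasWNAFWeightLeTwo_pow_mul_add_pow_mul (τ := τ) hw hD0 he hvD
    (a := j) (b := j + w + i) le_self_add using 1
  ring

lemma hasWNAFWeightLeTwo_pow_mul_add (hroot : τ ^ 2 - p * τ + q = 0)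
    (hre : τ.re = p / 2) (him2 : τ.im ^ 2 = q - p ^ 2 / 4) (hq : 2 ≤ q) (hw : 0 < w)
    (hD : IsMinNormDigitSet τ w D) {ρ : ℝ} (hR : ∀ d ∈ D, ‖d‖ ≤ ρ * ‖τ‖ ^ w) {c d : ℂ}
    (hc : c ∈ D) (hd : d ∈ D) {k : ℕ} (hk : 2 * ρ * (‖τ‖ ^ k + 2) < ‖τ‖ ^ w) :
    HasWNAFWeightLeTwo τ w D (τ ^ k * c + d) := by
  refine hD.hasWNAFWeightLeTwo_of_norm_add_lt hroot hre him2 hq hw hR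
    (add_mem_Ztau (pow_mul_mem_Ztau_of_root hroot k (hD.1 hc)) (hD.1 hd)) ?_
  have hz : ‖τ ^ k * c + d‖ ≤ ‖τ‖ ^ k * ‖c‖ + ‖d‖ := by
    simpa [norm_mul, norm_pow] using norm_add_le (τ ^ k * c) d
  have hτw : 0 < ‖τ‖ ^ w := pow_pos (one_pos.trans_le (one_le_norm_of_re_of_im_sq hre him2
    (by omega))) w
  nlinarith [hR c hc, hR d hd, pow_nonneg (norm_nonneg τ) k]

end IsMinNormDigitSet

theorem wsubadditive_of_large_w_general (p q : ℤ) (τ : ℂ)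
    (hroot : τ ^ 2 - (p : ℂ) * τ + (q : ℂ) = 0)
    (him : τ.im ≠ 0)
    (w : ℕ) (hw : 4 ≤ w) (hp : 3 ≤ |p|)
    (D : Set ℂ) (hD : IsMinNormDigitSet τ w D) :
    WSubadditive τ w D := by
  obtain ⟨hre, him2⟩ := re_eq_and_im_sq_eq_of_root hroot him
  have hq := three_le_of_three_le_abs him2 him hp
  have hτ := one_le_norm_of_re_of_im_sq hre him2 (by omega)
  obtain ⟨ρ, hρ0, hcov, hρ⟩ := exists_coveringRadius hre him2 him hp
  have hR (d : ℂ) (hd : d ∈ D) : ‖d‖ ≤ ρ * ‖τ‖ ^ w :=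
    hD.norm_le (norm_pos_iff.1 (by linarith)) hcov hd
  rintro c hc d hd - - m n
  wlog hnm : n ≤ m generalizing c d m n
  · simpa only [add_comm] using this d hd c hc n m (by omega)
  obtain ⟨k, rfl⟩ := Nat.exists_eq_add_of_le hnm
  rcases le_or_gt w k with hk | hk
  · rw [add_comm]
    exact hasWNAFWeightLeTwo_pow_mul_add_pow_mul (by omega) hD.2.1 hd hc (by omega)
  · have := (hD.hasWNAFWeightLeTwo_pow_mul_add hroot hre him2 (by omega) (by omega) hR hc hd
      (two_mul_mul_pow_add_two_lt hτ hρ0 hρ hk hw)).pow_mul hD.2.1 n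
    rwa [mul_add, ← mul_assoc, ← pow_add] at this

/-- For `w ≥ 4` and `|p| ≥ 3`, the minimal norm representatives digit set
modulo `τ^w` is `w`-subadditive. -/
theorem wsubadditive_of_large_w (p q : ℤ) (τ : ℂ)
    (hpq : p ^ 2 < 4 * q)
    (hroot : τ ^ 2 - (p : ℂ) * τ + (q : ℂ) = 0)
    (him : τ.im ≠ 0)
    (w : ℕ) (hw : 4 ≤ w) (hp : 3 ≤ |p|)
    (D : Set ℂ) (hD : IsMinNormDigitSet τ w D) :
    WSubadditive τ w D :=
  wsubadditive_of_large_w_general p q τ hroot him w hw hp D hD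
end
end

section
/- Let w ≥ 2 be an integer and D a minimal norm representatives digit set modulo τ^w. If τ^{w−1}·V + V + V ⊆ τ^w·int(V), where the left-hand side is the set of all sums τ^{w−1}·v₁ + v₂ + v₃ with v₁, v₂, v₃ ∈ V and int(V) denotes the interior of V, then D is w-subadditive. -/
/-!
Suppose `n ≤ m` with `m - n < w` (otherwise `τ^m c + τ^n d` is already a `w`-NAF). Strip the
`τ`-power from `τ^{m-n} c + d = τ^t (e + τ^{w+s} y)`, where `e` is the digit of the `τ`-free part
and `y` is not divisible by `τ`. Dividing by `τ^{t+w+s}` exhibits `y` as `τ^{w-1} v₁ + v₂ + v₃`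
with `v₁, v₂, v₃` the digits `c, d, -e` scaled into `V` (every digit lies in `τ^w V`, and `V` is
stable under negation and division by `τ`). The inclusion then gives `y ∈ τ^w int(V)`, and an
element of `τ^w int(V)` is strictly shorter than all others in its residue class, so `y` is
itself a digit and `τ^m c + τ^n d = τ^{n+t} e + τ^{n+t+w+s} y`.
-/

open Complex

noncomputable section

/-- The Voronoi cell of `0` for the lattice `ℤ[τ]`. -/
def VoronoiCell (τ : ℂ) : Set ℂ :=
  {z | ∀ y ∈ Ztau τ, ‖z‖ ≤ ‖z - y‖}

namespace Ztau

variable {p q : ℤ} {τ : ℂ}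

lemma add_mem {x y : ℂ} (hx : x ∈ Ztau τ) (hy : y ∈ Ztau τ) : x + y ∈ Ztau τ := by
  obtain ⟨a, b, rfl⟩ := hx
  obtain ⟨a', b', rfl⟩ := hy
  exact ⟨a + a', b + b', by push_cast; ring⟩

lemma neg_mem {x : ℂ} (hx : x ∈ Ztau τ) : -x ∈ Ztau τ := by
  obtain ⟨a, b, rfl⟩ := hx
  exact ⟨-a, -b, by push_cast; ring⟩

lemma tau_mul_mem (hroot : τ ^ 2 - (p : ℂ) * τ + (q : ℂ) = 0) {x : ℂ} (hx : x ∈ Ztau τ) :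
    τ * x ∈ Ztau τ := by
  obtain ⟨a, b, rfl⟩ := hx
  exact ⟨-q * b, a + p * b, by push_cast; linear_combination (b : ℂ) * hroot⟩

lemma tau_pow_mul_mem (hroot : τ ^ 2 - (p : ℂ) * τ + (q : ℂ) = 0) (k : ℕ) {x : ℂ}
    (hx : x ∈ Ztau τ) : τ ^ k * x ∈ Ztau τ := by
  induction k with
  | zero => simpa using hx
  | succ k ih => simpa only [pow_succ', mul_assoc] using tau_mul_mem hroot ih

lemma two_mul_re_tau (hroot : τ ^ 2 - (p : ℂ) * τ + (q : ℂ) = 0) (him : τ.im ≠ 0) :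
    2 * τ.re = p := by
  have h := congrArg Complex.im hroot
  simp only [pow_two, sub_im, add_im, mul_im, intCast_re, intCast_im, zero_im] at h
  have : (2 * τ.re - p) * τ.im = 0 := by linear_combination h
  linarith [(mul_eq_zero.mp this).resolve_right him]

lemma normSq_tau (hroot : τ ^ 2 - (p : ℂ) * τ + (q : ℂ) = 0) (him : τ.im ≠ 0) :
    normSq τ = q := by
  have h := congrArg Complex.re hroot
  simp only [pow_two, sub_re, add_re, mul_re, intCast_re, intCast_im, zero_re] at h
  rw [normSq_apply]
  linear_combination -h + τ.re * two_mul_re_tau hroot him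

lemma one_le_normSq (hroot : τ ^ 2 - (p : ℂ) * τ + (q : ℂ) = 0) (him : τ.im ≠ 0) {z : ℂ}
    (hz : z ∈ Ztau τ) (hz0 : z ≠ 0) : 1 ≤ normSq z := by
  obtain ⟨a, b, rfl⟩ := hz
  have hnorm : normSq ((a : ℂ) + (b : ℂ) * τ) = ((a ^ 2 + a * b * p + b ^ 2 * q : ℤ) : ℝ) := by
    have hre := two_mul_re_tau hroot him
    have hsq := normSq_tau hroot him
    rw [normSq_apply] at hsq ⊢
    simp only [add_re, add_im, mul_re, mul_im, intCast_re, intCast_im]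
    push_cast
    linear_combination (a * b : ℝ) * hre + (b ^ 2 : ℝ) * hsq
  have hpos := normSq_pos.mpr hz0
  rw [hnorm] at hpos ⊢
  exact_mod_cast (Int.cast_pos.mp hpos : (0 : ℤ) < _)

end Ztau

section Valuation

variable {p q : ℤ} {τ : ℂ}

lemma two_le_q_of_not_tauDvd (hroot : τ ^ 2 - (p : ℂ) * τ + (q : ℂ) = 0) (him : τ.im ≠ 0)
    {z : ℂ} (hz : z ∈ Ztau τ) (hnd : ¬ TauDvd τ z) : 2 ≤ q := by
  have hq_pos : (0 : ℝ) < q := by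
    rw [← Ztau.normSq_tau hroot him, normSq_pos]
    rintro rfl
    simp at him
  obtain hq1 | hq2 : q = 1 ∨ 2 ≤ q := by
    have : 0 < q := by exact_mod_cast hq_pos
    omega
  · subst hq1
    obtain ⟨a, b, rfl⟩ := hz
    -- `τ` is a unit: `τ * (p - τ) = q = 1`.
    exact absurd ⟨(p * a + b : ℤ) + (-a : ℤ) * τ, ⟨_, _, rfl⟩, by
      push_cast; linear_combination (a : ℂ) * hroot⟩ hnd
  · exact hq2

lemma exists_eq_tau_pow_mul_not_tauDvd (hroot : τ ^ 2 - (p : ℂ) * τ + (q : ℂ) = 0)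
    (him : τ.im ≠ 0) (hq : 2 ≤ q) {z : ℂ} (hz : z ∈ Ztau τ) (hz0 : z ≠ 0) :
    ∃ (t : ℕ) (y : ℂ), y ∈ Ztau τ ∧ ¬ TauDvd τ y ∧ z = τ ^ t * y := by
  suffices H : ∀ k : ℕ, ∀ z ∈ Ztau τ, z ≠ 0 → normSq z ≤ k →
      ∃ (t : ℕ) (y : ℂ), y ∈ Ztau τ ∧ ¬ TauDvd τ y ∧ z = τ ^ t * y from
    H _ z hz hz0 (Nat.le_ceil _)
  intro k
  induction k with
  | zero =>
    intro z hz hz0 hle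
    rw [Nat.cast_zero] at hle
    linarith [Ztau.one_le_normSq hroot him hz hz0]
  | succ k ih =>
    intro z hz hz0 hle
    by_cases hdvd : TauDvd τ z
    · obtain ⟨y, hy, rfl⟩ := hdvd
      have hy0 : y ≠ 0 := by rintro rfl; simp at hz0
      -- Dividing by `τ` divides the norm by `q ≥ 2`, so it drops by at least `1`.
      have hle' : normSq y ≤ k := by
        have h1 := Ztau.one_le_normSq hroot him hy hy0
        have hq' : (2 : ℝ) ≤ q := by exact_mod_cast hq
        rw [normSq_mul, Ztau.normSq_tau hroot him] at hle
        push_cast at hle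
        nlinarith
      obtain ⟨t, y', hy', hnd', rfl⟩ := ih y hy hy0 hle'
      exact ⟨t + 1, y', hy', hnd', by ring⟩
    · exact ⟨0, z, hz, hdvd, by simp⟩

end Valuation

namespace VoronoiCell

variable {p q : ℤ} {τ : ℂ}

lemma neg_mem {v : ℂ} (hv : v ∈ VoronoiCell τ) : -v ∈ VoronoiCell τ := fun y hy => by
  rw [norm_neg, show -v - y = -(v - -y) by ring, norm_neg]
  exact hv (-y) (Ztau.neg_mem hy)

lemma div_tau_mem (hroot : τ ^ 2 - (p : ℂ) * τ + (q : ℂ) = 0) (hτ : τ ≠ 0) {v : ℂ}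
    (hv : v ∈ VoronoiCell τ) : v / τ ∈ VoronoiCell τ := fun y hy => by
  rw [show v / τ - y = (v - τ * y) / τ by field_simp, norm_div, norm_div]
  gcongr
  exact hv _ (Ztau.tau_mul_mem hroot hy)

lemma div_tau_pow_mem (hroot : τ ^ 2 - (p : ℂ) * τ + (q : ℂ) = 0) (hτ : τ ≠ 0) (k : ℕ)
    {v : ℂ} (hv : v ∈ VoronoiCell τ) : v / τ ^ k ∈ VoronoiCell τ := by
  induction k with
  | zero => simpa using hv
  | succ k ih => simpa only [pow_succ, ← div_div] using div_tau_mem hroot hτ ih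

/-- `‖u‖² - ‖u - y‖²` is affine in `u`, and it is still `≤ 0` at `u + δ • y` for small `δ > 0`. -/
lemma norm_lt_norm_sub_of_mem_interior {u y : ℂ} (hu : u ∈ interior (VoronoiCell τ))
    (hy : y ∈ Ztau τ) (hy0 : y ≠ 0) : ‖u‖ < ‖u - y‖ := by
  obtain ⟨ε, hε, hball⟩ := Metric.isOpen_iff.mp isOpen_interior u hu
  have hy_pos : 0 < ‖y‖ := norm_pos_iff.mpr hy0
  set δ : ℝ := ε / (2 * ‖y‖)
  have hδ : 0 < δ := by positivity
  have hmem : u + δ • y ∈ VoronoiCell τ := by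
    refine interior_subset (hball ?_)
    rw [Metric.mem_ball, dist_eq_norm, add_sub_cancel_left, norm_smul, Real.norm_of_nonneg hδ.le,
      div_mul_eq_mul_div, div_lt_iff₀ (by positivity)]
    nlinarith
  have h := hmem y hy
  rw [add_sub_assoc, show δ • y - y = (δ - 1) • y by module] at h
  rw [← sq_lt_sq₀ (norm_nonneg _) (norm_nonneg _)]
  have h2 := pow_le_pow_left₀ (norm_nonneg _) h 2
  rw [norm_add_sq_real, norm_add_sq_real, norm_smul, norm_smul, inner_smul_right,
    inner_smul_right, Real.norm_of_nonneg hδ.le, mul_pow, mul_pow, Real.norm_eq_abs, sq_abs] at h2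
  rw [norm_sub_sq_real]
  have : 0 < δ * ‖y‖ ^ 2 := by positivity
  nlinarith

end VoronoiCell

namespace IsMinNormDigitSet

variable {τ : ℂ} {w : ℕ} {D : Set ℂ}

lemma norm_le_norm_sub (hD : IsMinNormDigitSet τ w D) {d y : ℂ} (hd : d ∈ D)
    (hy : y ∈ Ztau τ) : ‖d‖ ≤ ‖d - τ ^ w * y‖ := by
  rcases eq_or_ne d 0 with rfl | hd0
  · simp only [norm_zero, norm_nonneg]
  · exact (hD.2.2.1 d hd hd0).2.2 y hy

lemma div_pow_mem_voronoiCell (hD : IsMinNormDigitSet τ w D) (hτ : τ ≠ 0) {d : ℂ}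
    (hd : d ∈ D) : d / τ ^ w ∈ VoronoiCell τ := fun y hy => by
  have hτw : τ ^ w ≠ 0 := pow_ne_zero w hτ
  rw [show d / τ ^ w - y = (d - τ ^ w * y) / τ ^ w by field_simp, norm_div, norm_div]
  gcongr
  exact hD.norm_le_norm_sub hd hy

/-- By the strict Voronoi inequality, `τ^w u` is strictly shorter than every other element of its
residue class, so it must be its own digit. -/
lemma mem_of_eq_tau_pow_mul (hD : IsMinNormDigitSet τ w D) (hτ : τ ≠ 0) {x u : ℂ}
    (hx : x ∈ Ztau τ) (hnd : ¬ TauDvd τ x) (hu : u ∈ interior (VoronoiCell τ))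
    (hxu : x = τ ^ w * u) : x ∈ D := by
  obtain ⟨e, ⟨he, y, hy, hxe⟩, -⟩ := hD.2.2.2 x hx hnd
  rcases eq_or_ne y 0 with rfl | hy0
  · rwa [show x = e by linear_combination hxe]
  · have hle : ‖e‖ ≤ ‖x‖ := by
      rw [← show e - τ ^ w * -y = x by linear_combination -hxe]
      exact hD.norm_le_norm_sub he (Ztau.neg_mem hy)
    have hlt : ‖x‖ < ‖e‖ := by
      rw [hxu, show e = τ ^ w * (u - y) by linear_combination hxu - hxe, norm_mul, norm_mul]
      exact mul_lt_mul_of_pos_left (VoronoiCell.norm_lt_norm_sub_of_mem_interior hu hy hy0)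
        (norm_pos_iff.mpr (pow_ne_zero w hτ))
    exact absurd hle hlt.not_ge

end IsMinNormDigitSet

lemma exists_wnaf_of_eq_add {τ : ℂ} {w : ℕ} {D : Set ℂ} (hw : 0 < w) (hD0 : (0 : ℂ) ∈ D)
    {e f : ℂ} (he : e ∈ D) (hf : f ∈ D) {k₀ k₁ : ℕ} (hk : k₀ + w ≤ k₁) :
    ∃ η : ℕ →₀ ℂ, IsExpansion D η ∧ IsWNAF w η ∧
      evalue τ η = τ ^ k₀ * e + τ ^ k₁ * f ∧ eweight η ≤ 2 := by
  have hne : k₀ ≠ k₁ := by omega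
  let η := Finsupp.single k₀ e + Finsupp.single k₁ f
  have hsupp : ∀ i, η i ≠ 0 → i = k₀ ∨ i = k₁ := by
    intro i hi
    by_contra! h
    simp [η, Ne.symm h.1, Ne.symm h.2] at hi
  refine ⟨η, fun i => ?_, fun m n hmn hm hn => ?_, ?_, ?_⟩
  · by_cases h : η i = 0
    · rwa [h]
    · rcases hsupp i h with rfl | rfl
      · simpa [η, hne.symm] using he
      · simpa [η, hne] using hf
  · rcases hsupp m hm with rfl | rfl <;> rcases hsupp n hn with rfl | rfl <;>
      first
        | exact absurd rfl hmn
        | (rw [abs_of_nonneg (by omega)]; omega)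
        | (rw [abs_sub_comm, abs_of_nonneg (by omega)]; omega)
  · simp only [evalue, η]
    rw [Finsupp.sum_add_index' (fun _ => zero_mul _) (fun _ _ _ => add_mul _ _ _),
      Finsupp.sum_single_index (zero_mul _), Finsupp.sum_single_index (zero_mul _)]
    ring
  · calc eweight η ≤ ({k₀, k₁} : Finset ℕ).card :=
          Finset.card_le_card fun i hi => by simpa using hsupp i (Finsupp.mem_support_iff.mp hi)
      _ ≤ 2 := Finset.card_le_two

section Subadditivity

variable {p q : ℤ} {τ : ℂ} {w : ℕ} {D : Set ℂ}

lemma IsMinNormDigitSet.mem_of_add_eq (hroot : τ ^ 2 - (p : ℂ) * τ + (q : ℂ) = 0)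
    (hτ : τ ≠ 0) (hD : IsMinNormDigitSet τ w D)
    (hincl : ∀ v₁ ∈ VoronoiCell τ, ∀ v₂ ∈ VoronoiCell τ, ∀ v₃ ∈ VoronoiCell τ,
      ∃ u ∈ interior (VoronoiCell τ), τ ^ (w - 1) * v₁ + v₂ + v₃ = τ ^ w * u)
    {c d e y : ℂ} (hc : c ∈ D) (hd : d ∈ D) (he : e ∈ D) (hy : y ∈ Ztau τ)
    (hnd : ¬ TauDvd τ y) {j t s : ℕ} (hj : j < w)
    (h : τ ^ j * c + d = τ ^ t * e + τ ^ (t + w + s) * y) : y ∈ D := by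
  obtain ⟨k, rfl⟩ : ∃ k, w = j + k + 1 := ⟨w - 1 - j, by omega⟩
  have hV : ∀ x ∈ D, ∀ i : ℕ, x / τ ^ (j + k + 1) / τ ^ i ∈ VoronoiCell τ := fun x hx i =>
    VoronoiCell.div_tau_pow_mem hroot hτ i (hD.div_pow_mem_voronoiCell hτ hx)
  -- `y = τ^{w-1} v₁ + v₂ + v₃` with `v₁, v₂, v₃` the digits `c, d, -e` scaled into `V`.
  obtain ⟨u, hu, hsum⟩ := hincl _ (hV c hc (t + s + k)) _ (hV d hd (t + s)) _
    (VoronoiCell.neg_mem (hV e he s))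
  refine hD.mem_of_eq_tau_pow_mul hτ hy hnd hu ?_
  have hy_eq : y = (τ ^ j * c + d - τ ^ t * e) / τ ^ (t + (j + k + 1) + s) := by
    rw [eq_div_iff (pow_ne_zero _ hτ)]
    linear_combination -h
  rw [← hsum, Nat.add_sub_cancel, hy_eq]
  field_simp
  ring

lemma exists_two_digit_repr (hroot : τ ^ 2 - (p : ℂ) * τ + (q : ℂ) = 0) (him : τ.im ≠ 0)
    (hq : 2 ≤ q) (hD : IsMinNormDigitSet τ w D)
    (hincl : ∀ v₁ ∈ VoronoiCell τ, ∀ v₂ ∈ VoronoiCell τ, ∀ v₃ ∈ VoronoiCell τ,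
      ∃ u ∈ interior (VoronoiCell τ), τ ^ (w - 1) * v₁ + v₂ + v₃ = τ ^ w * u)
    {c d : ℂ} (hc : c ∈ D) (hd : d ∈ D) (j : ℕ) :
    ∃ e ∈ D, ∃ f ∈ D, ∃ k₀ k₁ : ℕ, k₀ + w ≤ k₁ ∧ τ ^ j * c + d = τ ^ k₀ * e + τ ^ k₁ * f := by
  have hD0 : (0 : ℂ) ∈ D := hD.2.1
  rcases le_or_gt w j with hwj | hjw
  · exact ⟨d, hd, c, hc, 0, j, by omega, by ring⟩
  have hz : τ ^ j * c + d ∈ Ztau τ :=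
    Ztau.add_mem (Ztau.tau_pow_mul_mem hroot j (hD.1 hc)) (hD.1 hd)
  rcases eq_or_ne (τ ^ j * c + d) 0 with hz0 | hz0
  · exact ⟨0, hD0, 0, hD0, 0, w, by omega, by simp [hz0]⟩
  obtain ⟨t, x, hx, hxnd, hzx⟩ := exists_eq_tau_pow_mul_not_tauDvd hroot him hq hz hz0
  obtain ⟨e, ⟨he, y, hy, hxe⟩, -⟩ := hD.2.2.2 x hx hxnd
  rcases eq_or_ne y 0 with rfl | hy0
  · exact ⟨e, he, 0, hD0, t, t + w, le_rfl, by linear_combination hzx + τ ^ t * hxe⟩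
  obtain ⟨s, f, hf, hfnd, rfl⟩ := exists_eq_tau_pow_mul_not_tauDvd hroot him hq hy hy0
  have hrepr : τ ^ j * c + d = τ ^ t * e + τ ^ (t + w + s) * f := by
    linear_combination hzx + τ ^ t * hxe
  have hτ : τ ≠ 0 := by rintro rfl; simp at him
  exact ⟨e, he, f, hD.mem_of_add_eq hroot hτ hincl hc hd he hf hfnd hjw hrepr,
    t, t + w + s, by omega, hrepr⟩

lemma exists_two_digit_repr_add (hroot : τ ^ 2 - (p : ℂ) * τ + (q : ℂ) = 0) (him : τ.im ≠ 0)
    (hq : 2 ≤ q) (hD : IsMinNormDigitSet τ w D)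
    (hincl : ∀ v₁ ∈ VoronoiCell τ, ∀ v₂ ∈ VoronoiCell τ, ∀ v₃ ∈ VoronoiCell τ,
      ∃ u ∈ interior (VoronoiCell τ), τ ^ (w - 1) * v₁ + v₂ + v₃ = τ ^ w * u)
    {c d : ℂ} (hc : c ∈ D) (hd : d ∈ D) (m n : ℕ) :
    ∃ e ∈ D, ∃ f ∈ D, ∃ k₀ k₁ : ℕ, k₀ + w ≤ k₁ ∧
      τ ^ m * c + τ ^ n * d = τ ^ k₀ * e + τ ^ k₁ * f := by
  wlog hnm : n ≤ m generalizing c d m n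
  · obtain ⟨e, he, f, hf, k₀, k₁, hk, h⟩ := this hd hc n m (by omega)
    exact ⟨e, he, f, hf, k₀, k₁, hk, by linear_combination h⟩
  obtain ⟨j, rfl⟩ := Nat.exists_eq_add_of_le hnm
  obtain ⟨e, he, f, hf, k₀, k₁, hk, h⟩ := exists_two_digit_repr hroot him hq hD hincl hc hd j
  refine ⟨e, he, f, hf, n + k₀, n + k₁, by omega, ?_⟩
  simp only [pow_add]
  linear_combination τ ^ n * h

end Subadditivity

theorem wsubadditive_of_voronoi_inclusion_general (p q : ℤ) (τ : ℂ)
    (hroot : τ ^ 2 - (p : ℂ) * τ + (q : ℂ) = 0)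
    (him : τ.im ≠ 0)
    (w : ℕ) (hw : 2 ≤ w)
    (D : Set ℂ) (hD : IsMinNormDigitSet τ w D)
    (hincl : ∀ v₁ ∈ VoronoiCell τ, ∀ v₂ ∈ VoronoiCell τ, ∀ v₃ ∈ VoronoiCell τ,
      ∃ u ∈ interior (VoronoiCell τ), τ ^ (w - 1) * v₁ + v₂ + v₃ = τ ^ w * u) :
    WSubadditive τ w D := by
  intro c hc d hd hc0 _ m n
  have hq : 2 ≤ q := two_le_q_of_not_tauDvd hroot him (hD.1 hc) (hD.2.2.1 c hc hc0).2.1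
  obtain ⟨e, he, f, hf, k₀, k₁, hk, hrepr⟩ :=
    exists_two_digit_repr_add hroot him hq hD hincl hc hd m n
  obtain ⟨η, hη, hnaf, hval, hweight⟩ := exists_wnaf_of_eq_add (by omega) hD.2.1 he hf hk
  exact ⟨η, hη, hnaf, hval.trans hrepr.symm, hweight⟩

/-- If `τ^{w-1}·V + V + V ⊆ τ^w·int(V)`, then the minimal norm representatives
digit set modulo `τ^w` is `w`-subadditive. -/
theorem wsubadditive_of_voronoi_inclusion (p q : ℤ) (τ : ℂ)
    (hpq : p ^ 2 < 4 * q)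
    (hroot : τ ^ 2 - (p : ℂ) * τ + (q : ℂ) = 0)
    (him : τ.im ≠ 0)
    (w : ℕ) (hw : 2 ≤ w)
    (D : Set ℂ) (hD : IsMinNormDigitSet τ w D)
    (hincl : ∀ v₁ ∈ VoronoiCell τ, ∀ v₂ ∈ VoronoiCell τ, ∀ v₃ ∈ VoronoiCell τ,
      ∃ u ∈ interior (VoronoiCell τ), τ ^ (w - 1) * v₁ + v₂ + v₃ = τ ^ w * u) :
    WSubadditive τ w D :=
  wsubadditive_of_voronoi_inclusion_general p q τ hroot him w hw D hD hincl
end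
end

section
/- Let τ = 1 + i, let w ≥ 3 be an odd integer and D a minimal norm representatives digit set modulo τ^w. Then every z ∈ τ^w·V ∩ ℤ[i] (where τ^w·V = {τ^w·v : v ∈ V}) can be written as z = τ^ℓ·d for some ℓ ∈ ℕ and some d ∈ D; in particular every such z is the value of a w-NAF-expansion of weight at most 1. -/
open Complex

noncomputable section

/-! Write `z = τ^ℓ z'` with `τ ∤ z'`. That `z` lies in `τ^w V` says that `z` has minimal norm in
its class modulo `τ^w`, and dividing by `τ^ℓ` preserves this, so `z'` is a minimal norm
representative, as is the digit `d ∈ D` of its class. For `w = 2k + 1` we have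
`τ^w ℤ[i] = 2^k τ ℤ[i]` because `τ² = 2i`, and minimality of `x = a + bi` tested against the units
bounds `|a + b|` and `|b - a|` by `2^k`. When `τ ∤ x` both are odd, so the bounds are strict, and
this makes `x` the unique element of minimal norm in its class. Hence `z' = d`. -/
local notation "ℤ[i]" => GaussianInt

local notation "τ" => (1 + Zsqrtd.sqrtd : ℤ[i])

lemma mul_add_abs_le_of_abs_lt {m s : ℤ} (hs : |s| < m) (p : ℤ) : s * p + |p| ≤ m * p ^ 2 := by
  have hsp : s * p ≤ |s| * |p| := abs_mul s p ▸ le_abs_self _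
  have hp : |p| ≤ p ^ 2 := Int.natCast_natAbs p ▸ Int.natAbs_le_self_sq p
  nlinarith [mul_le_mul_of_nonneg_right (Int.add_one_le_of_lt hs) (abs_nonneg p),
    mul_le_mul_of_nonneg_left hp ((abs_nonneg s).trans hs.le)]

lemma mul_add_mul_lt_of_abs_lt {m s t p q : ℤ} (hs : |s| < m) (ht : |t| < m)
    (hpq : p ≠ 0 ∨ q ≠ 0) : s * p + t * q < m * (p ^ 2 + q ^ 2) := by
  have hpos : 0 < |p| + |q| := by
    rcases hpq with h | h <;> positivity
  linarith [mul_add_abs_le_of_abs_lt hs p, mul_add_abs_le_of_abs_lt ht q]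

lemma norm_mul_le_norm_mul_sub_of_mem_voronoiCell {β v : ℂ} (hv : v ∈ VoronoiCell β) (c : ℂ)
    {y : ℂ} (hy : y ∈ Ztau β) : ‖c * v‖ ≤ ‖c * v - c * y‖ := by
  rw [← mul_sub, norm_mul, norm_mul]
  exact mul_le_mul_of_nonneg_left (hv y hy) (norm_nonneg c)

lemma exists_wnaf_single {D : Set ℂ} (hD0 : 0 ∈ D) {d : ℂ} (hd : d ∈ D) (β : ℂ) (w ℓ : ℕ) :
    ∃ η : ℕ →₀ ℂ, IsExpansion D η ∧ IsWNAF w η ∧ evalue β η = β ^ ℓ * d ∧ eweight η ≤ 1 := by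
  refine ⟨Finsupp.single ℓ d, fun n => ?_, fun m n hmn hm hn => ?_, ?_, ?_⟩
  · rw [Finsupp.single_apply]
    split_ifs <;> assumption
  · rw [Finsupp.single_apply_ne_zero] at hm hn
    exact absurd (hm.1.trans hn.1.symm) hmn
  · simp [evalue, mul_comm]
  · exact (Finset.card_le_card Finsupp.support_single_subset).trans (by simp)

lemma GaussianInt.norm_eq_re_sq_add_im_sq (u : ℤ[i]) : u.norm = u.re ^ 2 + u.im ^ 2 := by
  rw [Zsqrtd.norm_def]; ring

lemma GaussianInt.norm_coe_le_norm_coe_iff {x y : ℤ[i]} :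
    ‖(x : ℂ)‖ ≤ ‖(y : ℂ)‖ ↔ x.norm ≤ y.norm := by
  rw [← sq_le_sq₀ (_root_.norm_nonneg _) (_root_.norm_nonneg _), Complex.sq_norm, Complex.sq_norm,
    ← intCast_real_norm, ← intCast_real_norm, Int.cast_le]

lemma GaussianInt.norm_le_norm_sub_mul_of_mul {c x g : ℤ[i]} (hc : c ≠ 0)
    (h : ∀ y : ℤ[i], (c * x).norm ≤ (c * x - g * y).norm) (y : ℤ[i]) :
    x.norm ≤ (x - g * y).norm := by
  have := h (c * y)
  rw [show c * x - g * (c * y) = c * (x - g * y) by ring, Zsqrtd.norm_mul, Zsqrtd.norm_mul] at this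
  exact le_of_mul_le_mul_left this (norm_pos.2 hc)

lemma coe_tau : ((τ : ℤ[i]) : ℂ) = 1 + I := by
  simp [GaussianInt.toComplex_def]

lemma tau_ne_zero : τ ≠ 0 := by decide

lemma not_isUnit_tau : ¬ IsUnit τ := by
  rw [← Zsqrtd.norm_eq_one_iff]
  decide

lemma tau_pow_odd (k : ℕ) : τ ^ (2 * k + 1) = 2 ^ k * Zsqrtd.sqrtd ^ k * τ := by
  have h : τ ^ 2 = 2 * Zsqrtd.sqrtd := by
    linear_combination (Zsqrtd.dmuld : Zsqrtd.sqrtd (d := -1) * Zsqrtd.sqrtd = _)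
  rw [pow_succ, pow_mul, h, mul_pow]

lemma mem_Ztau_iff {z : ℂ} : z ∈ Ztau (1 + I) ↔ ∃ x : ℤ[i], (x : ℂ) = z := by
  constructor
  · rintro ⟨a, b, rfl⟩
    exact ⟨⟨a + b, b⟩, by simp [GaussianInt.toComplex_def]; ring⟩
  · rintro ⟨x, rfl⟩
    exact ⟨x.re - x.im, x.im, by simp [GaussianInt.toComplex_def]; ring⟩

lemma coe_mem_Ztau (x : ℤ[i]) : (x : ℂ) ∈ Ztau (1 + I) := mem_Ztau_iff.2 ⟨x, rfl⟩

lemma tauDvd_coe_iff (x : ℤ[i]) : TauDvd (1 + I) x ↔ τ ∣ x := by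
  constructor
  · rintro ⟨y, hy, hxy⟩
    obtain ⟨y, rfl⟩ := mem_Ztau_iff.1 hy
    exact ⟨y, GaussianInt.toComplex_injective (by simpa [coe_tau] using hxy)⟩
  · rintro ⟨y, rfl⟩
    exact ⟨y, coe_mem_Ztau y, by simp [coe_tau]⟩

lemma forall_mem_Ztau_norm_le_iff (w : ℕ) (x : ℤ[i]) :
    (∀ y ∈ Ztau (1 + I), ‖(x : ℂ)‖ ≤ ‖(x : ℂ) - (1 + I) ^ w * y‖) ↔
      ∀ y : ℤ[i], x.norm ≤ (x - τ ^ w * y).norm := by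
  simp only [mem_Ztau_iff, forall_exists_index, forall_apply_eq_imp_iff,
    ← GaussianInt.norm_coe_le_norm_coe_iff, map_sub, map_mul, map_pow, coe_tau]

lemma odd_re_add_im_of_not_dvd {x : ℤ[i]} (hx : ¬ τ ∣ x) : Odd (x.re + x.im) := by
  rw [← Int.not_even_iff_odd]
  rintro ⟨c, hc⟩
  exact hx ⟨⟨c, x.im - c⟩, by ext <;> simp; omega⟩

-- The middle term is `2 m Re (x * conj (τ u))`, and `x * conj τ = (x.re + x.im) + (x.im - x.re) i`.
lemma norm_sub_mul_tau_mul (x u : ℤ[i]) (m : ℤ) :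
    (x - m * (τ * u)).norm = x.norm
      - 2 * m * ((x.re + x.im) * u.re + (x.im - x.re) * u.im) + 2 * m ^ 2 * u.norm := by
  simp only [GaussianInt.norm_eq_re_sq_add_im_sq, Zsqrtd.re_sub, Zsqrtd.im_sub, Zsqrtd.re_mul,
    Zsqrtd.im_mul, Zsqrtd.re_add, Zsqrtd.im_add, Zsqrtd.re_intCast, Zsqrtd.im_intCast,
    Zsqrtd.re_one, Zsqrtd.im_one, Zsqrtd.re_sqrtd, Zsqrtd.im_sqrtd]
  ring

lemma norm_lt_norm_sub_mul_tau_mul {m : ℤ} (hm0 : 0 < m) (hm : Even m) {x : ℤ[i]}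
    (hx : Odd (x.re + x.im)) (hmin : ∀ u : ℤ[i], x.norm ≤ (x - m * (τ * u)).norm)
    {u : ℤ[i]} (hu : u ≠ 0) : x.norm < (x - m * (τ * u)).norm := by
  have hbound (u : ℤ[i]) : (x.re + x.im) * u.re + (x.im - x.re) * u.im ≤ m * u.norm := by
    have := hmin u
    rw [norm_sub_mul_tau_mul] at this
    nlinarith
  have hodd : Odd (x.im - x.re) := by
    rw [show x.im - x.re = x.re + x.im - 2 * x.re by ring]
    exact hx.sub_even (even_two_mul x.re)
  have abs_lt_of_odd {s : ℤ} (hs : Odd s) (h₁ : s ≤ m) (h₂ : -s ≤ m) : |s| < m := by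
    obtain ⟨r, rfl⟩ := hs; obtain ⟨n, rfl⟩ := hm
    exact abs_lt.2 ⟨by omega, by omega⟩
  have hs := abs_lt_of_odd hx (by simpa using hbound 1) (by simpa using hbound (-1))
  have ht := abs_lt_of_odd hodd
    (by simpa [GaussianInt.norm_eq_re_sq_add_im_sq] using hbound Zsqrtd.sqrtd)
    (by simpa [GaussianInt.norm_eq_re_sq_add_im_sq] using hbound (-Zsqrtd.sqrtd))
  have hre_im : u.re ≠ 0 ∨ u.im ≠ 0 := by
    contrapose! hu
    ext <;> simp [hu]
  rw [norm_sub_mul_tau_mul, GaussianInt.norm_eq_re_sq_add_im_sq u]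
  nlinarith [mul_add_mul_lt_of_abs_lt hs ht hre_im]

lemma norm_lt_norm_sub_tau_pow_mul {k : ℕ} (hk : 1 ≤ k) {x : ℤ[i]} (hx : ¬ τ ∣ x)
    (hmin : ∀ y : ℤ[i], x.norm ≤ (x - τ ^ (2 * k + 1) * y).norm) {y : ℤ[i]} (hy : y ≠ 0) :
    x.norm < (x - τ ^ (2 * k + 1) * y).norm := by
  have hτ (y : ℤ[i]) :
      τ ^ (2 * k + 1) * y = ((2 ^ k : ℤ) : ℤ[i]) * (τ * (Zsqrtd.sqrtd ^ k * y)) := by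
    rw [tau_pow_odd]; push_cast; ring
  have hunit : (Zsqrtd.sqrtd : ℤ[i]) * -Zsqrtd.sqrtd = 1 := by decide
  rw [hτ]
  refine norm_lt_norm_sub_mul_tau_mul (by positivity) ((Int.even_pow' (by omega)).2 even_two)
    (odd_re_add_im_of_not_dvd hx) (fun u => ?_) (mul_ne_zero (pow_ne_zero _ (by decide)) hy)
  have := hmin ((-Zsqrtd.sqrtd) ^ k * u)
  rwa [hτ, ← mul_assoc (Zsqrtd.sqrtd ^ k), ← mul_pow, hunit, one_pow, one_mul] at this

lemma eq_of_sub_eq_tau_pow_mul {k : ℕ} (hk : 1 ≤ k) {x x' y : ℤ[i]} (hx : ¬ τ ∣ x)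
    (hxmin : ∀ y : ℤ[i], x.norm ≤ (x - τ ^ (2 * k + 1) * y).norm)
    (hx'min : ∀ y : ℤ[i], x'.norm ≤ (x' - τ ^ (2 * k + 1) * y).norm)
    (hxx' : x - x' = τ ^ (2 * k + 1) * y) : x = x' := by
  by_contra hne
  have hy : y ≠ 0 := by
    rintro rfl
    exact hne (sub_eq_zero.1 (by simpa using hxx'))
  have hlt := norm_lt_norm_sub_tau_pow_mul hk hx hxmin hy
  have hle := hx'min (-y)
  rw [show x - τ ^ (2 * k + 1) * y = x' by linear_combination hxx'] at hlt
  rw [show x' - τ ^ (2 * k + 1) * -y = x by linear_combination -hxx'] at hle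
  exact hle.not_gt hlt

lemma exists_eq_pow_mul_mem_of_forall_norm_le {k : ℕ} (hk : 1 ≤ k) {D : Set ℂ}
    (hD : IsMinNormDigitSet (1 + I) (2 * k + 1) D) {x : ℤ[i]}
    (hmin : ∀ y : ℤ[i], x.norm ≤ (x - τ ^ (2 * k + 1) * y).norm) :
    ∃ ℓ : ℕ, ∃ d ∈ D, (x : ℂ) = (1 + I) ^ ℓ * d := by
  obtain ⟨hDZ, hD0, hDmin, hDrep⟩ := hD
  rcases eq_or_ne x 0 with rfl | hx0
  · exact ⟨0, 0, hD0, by simp⟩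
  obtain ⟨ℓ, x', hx', rfl⟩ := WfDvdMonoid.max_power_factor' hx0 not_isUnit_tau
  have hx'min := GaussianInt.norm_le_norm_sub_mul_of_mul (pow_ne_zero ℓ tau_ne_zero) hmin
  obtain ⟨d, ⟨hdD, y, hy, hx'd⟩, -⟩ :=
    hDrep x' (coe_mem_Ztau x') ((tauDvd_coe_iff x').not.2 hx')
  obtain ⟨d, rfl⟩ := mem_Ztau_iff.1 (hDZ hdD)
  obtain ⟨y, rfl⟩ := mem_Ztau_iff.1 hy
  replace hx'd : x' - d = τ ^ (2 * k + 1) * y :=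
    GaussianInt.toComplex_injective (by simpa [coe_tau] using hx'd)
  have hd0 : d ≠ 0 := by
    rintro rfl
    rw [sub_zero, pow_succ', mul_assoc] at hx'd
    exact hx' (Dvd.intro _ hx'd.symm)
  have hdmin := (forall_mem_Ztau_norm_le_iff _ d).1
    (hDmin _ hdD (by simpa using hd0)).2.2
  have hx'_eq : x' = d := eq_of_sub_eq_tau_pow_mul hk hx' hx'min hdmin hx'd
  exact ⟨ℓ, d, hdD, by simp [hx'_eq, coe_tau]⟩

/-- For `τ = 1 + i` and odd `w ≥ 3`: every lattice point in `τ^w·V` is of the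
form `τ^ℓ·d` with `d ∈ D`; in particular it has a `w`-NAF-expansion of weight
at most `1`. -/
theorem lattice_point_in_scaled_voronoi_is_shifted_digit
    (w : ℕ) (hw : 3 ≤ w) (hwodd : Odd w)
    (D : Set ℂ) (hD : IsMinNormDigitSet (1 + Complex.I) w D) :
    ∀ z ∈ Ztau (1 + Complex.I),
      (∃ v ∈ VoronoiCell (1 + Complex.I), z = (1 + Complex.I) ^ w * v) →
      (∃ ℓ : ℕ, ∃ d ∈ D, z = (1 + Complex.I) ^ ℓ * d) ∧
      (∃ η : ℕ →₀ ℂ, IsExpansion D η ∧ IsWNAF w η ∧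
        evalue (1 + Complex.I) η = z ∧ eweight η ≤ 1) := by
  rintro z hz ⟨v, hv, hzv⟩
  obtain ⟨k, rfl⟩ := hwodd
  obtain ⟨x, rfl⟩ := mem_Ztau_iff.1 hz
  have hmin : ∀ y ∈ Ztau (1 + I), ‖(x : ℂ)‖ ≤ ‖(x : ℂ) - (1 + I) ^ (2 * k + 1) * y‖ := by
    rw [hzv]
    exact fun y => norm_mul_le_norm_mul_sub_of_mem_voronoiCell hv _
  obtain ⟨ℓ, d, hd, hxd⟩ := exists_eq_pow_mul_mem_of_forall_norm_le (by omega) hD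
    ((forall_mem_Ztau_norm_le_iff _ x).1 hmin)
  exact ⟨⟨ℓ, d, hd, hxd⟩, hxd ▸ exists_wnaf_single hD.2.1 hd _ _ ℓ⟩
end
end

section
/- Suppose p = 0 and q ≥ 2, let w ≥ 3 be an odd integer and D a minimal norm representatives digit set modulo τ^w. Then there exist z ∈ ℤ[τ], a w-NAF-expansion η with value z, and a multi-expansion μ with value z such that weight(μ) < weight(η); i.e., some element of ℤ[τ] has a non-optimal w-NAF-expansion. -/
open Complex

noncomputable section

/-!
For `p = 0` we have `τ² = -q`, and writing `w = 2k + 1`, `r := τ^(w-1) = (-q)^k` is a rational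
integer with `τ^w = rτ`. Since `‖a + bτ‖² = a² + qb²` and `τ^w ℤ[τ] = {-qrv + ruτ}`, the
elements `x + yτ` with `q ∤ x`, `|2x| < q|r|` and `|2y| < |r|` are digits, and for `|2y| = |r|`
one of `x ± yτ` is.

For integers `A, B, y, C, E, F` the `w`-NAF `A + (B + yτ)τ^w + Cτ^(2w)` has value
`A - qry - qr²C + rBτ`, and the two-digit multi-expansion `E + (F + Bτ)τ^(w-1)` has value
`E + rF + rBτ`. So it suffices to solve `A - qry - qr²C = E + rF` with all five digits admissible,
which is done explicitly, separately for odd and even `q`. For even `q` the tie `|2y| = |r|` in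
the digit `B + yτ` cannot be avoided, so the sign of `y` (and for `q = 2`, `w = 3` also that of
`B`) is dictated by `D`.
-/

namespace Ztau

variable {τ : ℂ}

theorem intCast_add_mul_inj (him : τ.im ≠ 0) {a b a' b' : ℤ} :
    (a : ℂ) + b * τ = a' + b' * τ ↔ a = a' ∧ b = b' := by
  refine ⟨fun h => ?_, fun ⟨ha, hb⟩ => by rw [ha, hb]⟩
  have hb : b = b' := by
    have := congrArg Complex.im h
    simp only [add_im, intCast_im, mul_im, intCast_re, zero_mul, add_zero, zero_add] at this
    exact_mod_cast mul_right_cancel₀ him this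
  subst hb
  exact ⟨by exact_mod_cast add_right_cancel h, rfl⟩

theorem intCast_add_mul_eq_zero (him : τ.im ≠ 0) {a b : ℤ} :
    (a : ℂ) + b * τ = 0 ↔ a = 0 ∧ b = 0 := by
  simpa using intCast_add_mul_inj him (a' := 0) (b' := 0)

theorem re_eq_zero_of_sq_im_eq_zero (h : (τ ^ 2).im = 0) (him : τ.im ≠ 0) : τ.re = 0 := by
  rw [sq, mul_im] at h
  exact (mul_eq_zero.1 (by linarith : τ.re * τ.im = 0)).resolve_right him

variable {q : ℤ}

theorem normSq_intCast_add_mul (hτ : τ ^ 2 = -q) (him : τ.im ≠ 0) (a b : ℤ) :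
    normSq ((a : ℂ) + b * τ) = ((a ^ 2 + q * b ^ 2 : ℤ) : ℝ) := by
  have hre := re_eq_zero_of_sq_im_eq_zero (by simp [hτ]) him
  have him2 : τ.im ^ 2 = q := by
    have h := congrArg Complex.re hτ
    simp only [sq, mul_re, hre, neg_re, intCast_re] at h
    linarith
  simp only [normSq_apply, add_re, add_im, mul_re, mul_im, intCast_re, intCast_im, hre]
  push_cast
  linear_combination (b : ℝ) ^ 2 * him2

theorem not_tauDvd (hτ : τ ^ 2 = -q) (him : τ.im ≠ 0) {x : ℤ} (hx : ¬ q ∣ x) (y : ℤ) :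
    ¬ TauDvd τ (x + y * τ) := by
  rintro ⟨_, ⟨u, v, rfl⟩, h⟩
  have : (x : ℂ) + y * τ = ((-q * v : ℤ) : ℂ) + u * τ := by
    push_cast
    linear_combination h + (v : ℂ) * hτ
  exact hx ⟨-v, by linarith [((intCast_add_mul_inj him).1 this).1]⟩

end Ztau

theorem Int.sq_le_sq_add_mul {a m : ℤ} (h : 4 * a ^ 2 ≤ m ^ 2) (n : ℤ) :
    a ^ 2 ≤ (a + m * n) ^ 2 := by
  rcases eq_or_ne n 0 with rfl | hn
  · simp
  have : 1 ≤ n ^ 2 := (one_le_sq_iff_one_le_abs n).2 (Int.one_le_abs hn)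
  nlinarith [sq_nonneg (2 * a + m * n), mul_le_mul_of_nonneg_left this (sq_nonneg m)]

theorem Int.sq_lt_sq_add_mul {a m : ℤ} (h : 4 * a ^ 2 < m ^ 2) {n : ℤ} (hn : n ≠ 0) :
    a ^ 2 < (a + m * n) ^ 2 := by
  have : 1 ≤ n ^ 2 := (one_le_sq_iff_one_le_abs n).2 (Int.one_le_abs hn)
  nlinarith [sq_nonneg (2 * a + m * n), mul_le_mul_of_nonneg_left this (sq_nonneg m)]

theorem Int.not_dvd_of_dvd_sub {q x y : ℤ} (h : q ∣ x - y) (hy : y ≠ 0) (hyq : |y| < q) :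
    ¬ q ∣ x :=
  fun hx => hy (Int.eq_zero_of_abs_lt_dvd ((dvd_iff_dvd_of_dvd_sub h).1 hx) hyq)

theorem Int.not_dvd_one_of_two_le {q : ℤ} (hq : 2 ≤ q) : ¬ q ∣ 1 :=
  fun h => by have := Int.le_of_dvd one_pos h; omega

theorem Int.four_mul_sq_lt_sq {x m : ℤ} (h₁ : -m < 2 * x) (h₂ : 2 * x < m) :
    4 * x ^ 2 < m ^ 2 := by
  nlinarith [sq_lt_sq' h₁ h₂]

theorem Int.isUnit_mul_sq {u : ℤ} (hu : IsUnit u) (x : ℤ) : (u * x) ^ 2 = x ^ 2 := by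
  rw [mul_pow, Int.isUnit_sq hu, one_mul]

theorem pow_eq_mul_self_of_pow_pred_eq {τ r : ℂ} {w : ℕ} (hw : w ≠ 0) (h : τ ^ (w - 1) = r) :
    τ ^ w = r * τ := by
  rw [← h, ← pow_succ, Nat.sub_add_cancel (Nat.one_le_iff_ne_zero.2 hw)]

section DigitSet

variable {q r : ℤ} {τ : ℂ} {w : ℕ} {D : Set ℂ}

theorem exists_mem_digitSet (hτ : τ ^ 2 = -q) (him : τ.im ≠ 0) (hq : 0 < q)
    (hτw : τ ^ w = r * τ) (hD : IsMinNormDigitSet τ w D) {x y : ℤ} (hx : ¬ q ∣ x)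
    (hx2 : 4 * x ^ 2 < (q * r) ^ 2) (hy2 : 4 * y ^ 2 ≤ r ^ 2) :
    ∃ u : ℤ, (y - r * u) ^ 2 = y ^ 2 ∧ (x : ℂ) + (y - r * u : ℤ) * τ ∈ D := by
  obtain ⟨-, -, hmin, hrep⟩ := hD
  obtain ⟨d, ⟨hdD, _, ⟨u, v, rfl⟩, hd⟩, -⟩ :=
    hrep _ ⟨x, y, rfl⟩ (Ztau.not_tauDvd hτ him hx y)
  rw [hτw] at hd
  have hd_eq : d = ((x + q * r * v : ℤ) : ℂ) + (y - r * u : ℤ) * τ := by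
    push_cast
    linear_combination -hd - (r * v : ℂ) * hτ
  have hd0 : d ≠ 0 := by
    rw [hd_eq, Ne, Ztau.intCast_add_mul_eq_zero him]
    exact fun h => hx ⟨-(r * v), by linarith [h.1]⟩
  have hnorm : ‖d‖ ≤ ‖(x : ℂ) + y * τ‖ := by
    have := (hmin d hdD hd0).2.2 _ ⟨-u, -v, rfl⟩
    rwa [hτw, show d - r * τ * (((-u : ℤ) : ℂ) + ((-v : ℤ) : ℂ) * τ) = x + y * τ by
      push_cast; linear_combination -hd] at this
  have hnormSq : (x + q * r * v) ^ 2 + q * (y - r * u) ^ 2 ≤ x ^ 2 + q * y ^ 2 := by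
    have := pow_le_pow_left₀ (norm_nonneg _) hnorm 2
    rw [← normSq_eq_norm_sq, ← normSq_eq_norm_sq, hd_eq, Ztau.normSq_intCast_add_mul hτ him,
      Ztau.normSq_intCast_add_mul hτ him] at this
    exact_mod_cast this
  -- each coordinate of `x + yτ` is already minimal modulo `qr` resp. `r`, so equality holds in both
  have hx_le := Int.sq_le_sq_add_mul hx2.le v
  have hy_le := Int.sq_le_sq_add_mul hy2 (-u)
  have hv : v = 0 := by
    by_contra hv
    have := Int.sq_lt_sq_add_mul hx2 hv
    nlinarith
  refine ⟨u, by nlinarith, ?_⟩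
  simpa [hd_eq, hv] using hdD

theorem mem_digitSet_of_lt (hτ : τ ^ 2 = -q) (him : τ.im ≠ 0) (hq : 0 < q)
    (hτw : τ ^ w = r * τ) (hD : IsMinNormDigitSet τ w D) {x y : ℤ} (hx : ¬ q ∣ x)
    (hx2 : 4 * x ^ 2 < (q * r) ^ 2) (hy2 : 4 * y ^ 2 < r ^ 2) :
    (x : ℂ) + y * τ ∈ D := by
  obtain ⟨u, hu, hmem⟩ := exists_mem_digitSet hτ him hq hτw hD hx hx2 hy2.le
  obtain rfl : u = 0 := by
    by_contra h
    have := Int.sq_lt_sq_add_mul hy2 (neg_ne_zero.2 h)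
    rw [mul_neg, ← sub_eq_add_neg] at this
    exact this.ne' hu
  simpa using hmem

theorem intCast_mem_digitSet (hτ : τ ^ 2 = -q) (him : τ.im ≠ 0) (hq : 0 < q)
    (hτw : τ ^ w = r * τ) (hD : IsMinNormDigitSet τ w D) {x : ℤ} (hx : ¬ q ∣ x)
    (hx2 : 4 * x ^ 2 < (q * r) ^ 2) : (x : ℂ) ∈ D := by
  have hr : r ≠ 0 := by rintro rfl; simp at hx2; nlinarith
  simpa using mem_digitSet_of_lt hτ him hq hτw hD hx hx2 (y := 0) (by positivity)

theorem mem_digitSet_or_of_eq (hτ : τ ^ 2 = -q) (him : τ.im ≠ 0) (hq : 0 < q)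
    (hτw : τ ^ w = r * τ) (hD : IsMinNormDigitSet τ w D) {x y : ℤ} (hx : ¬ q ∣ x)
    (hx2 : 4 * x ^ 2 < (q * r) ^ 2) (hy2 : 4 * y ^ 2 = r ^ 2) :
    (x : ℂ) + y * τ ∈ D ∨ (x : ℂ) + (-y : ℤ) * τ ∈ D := by
  obtain ⟨u, hu, hmem⟩ := exists_mem_digitSet hτ him hq hτw hD hx hx2 hy2.le
  rcases sq_eq_sq_iff_eq_or_eq_neg.1 hu with h | h <;> rw [h] at hmem
  exacts [Or.inl hmem, Or.inr hmem]

end DigitSet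

section Expansion

variable {w : ℕ}

def tripleExpansion (w : ℕ) (e₀ e₁ e₂ : ℂ) : ℕ →₀ ℂ :=
  Finsupp.single 0 e₀ + Finsupp.single w e₁ + Finsupp.single (2 * w) e₂

theorem tripleExpansion_apply (hw : w ≠ 0) (e₀ e₁ e₂ : ℂ) (n : ℕ) :
    tripleExpansion w e₀ e₁ e₂ n =
      if n = 0 then e₀ else if n = w then e₁ else if n = 2 * w then e₂ else 0 := by
  simp only [tripleExpansion, Finsupp.add_apply, Finsupp.single_apply]
  split_ifs <;> first | omega | simp

theorem support_tripleExpansion (hw : w ≠ 0) {e₀ e₁ e₂ : ℂ} (h₀ : e₀ ≠ 0) (h₁ : e₁ ≠ 0)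
    (h₂ : e₂ ≠ 0) : (tripleExpansion w e₀ e₁ e₂).support = {0, w, 2 * w} := by
  ext n
  simp only [Finsupp.mem_support_iff, tripleExpansion_apply hw, Finset.mem_insert,
    Finset.mem_singleton]
  split_ifs <;> simp_all

theorem isExpansion_tripleExpansion (hw : w ≠ 0) {D : Set ℂ} (h0 : 0 ∈ D) {e₀ e₁ e₂ : ℂ}
    (h₀ : e₀ ∈ D) (h₁ : e₁ ∈ D) (h₂ : e₂ ∈ D) : IsExpansion D (tripleExpansion w e₀ e₁ e₂) := by
  intro n
  rw [tripleExpansion_apply hw]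
  split_ifs <;> assumption

theorem isWNAF_tripleExpansion (hw : w ≠ 0) (e₀ e₁ e₂ : ℂ) :
    IsWNAF w (tripleExpansion w e₀ e₁ e₂) := by
  intro m n hmn hm hn
  rw [tripleExpansion_apply hw] at hm hn
  rw [le_abs]
  split_ifs at hm hn <;> first | omega | simp at hm hn

theorem evalue_tripleExpansion (τ e₀ e₁ e₂ : ℂ) :
    evalue τ (tripleExpansion w e₀ e₁ e₂) = e₀ + e₁ * τ ^ w + e₂ * τ ^ (2 * w) := by
  simp [evalue, tripleExpansion, Finsupp.sum_add_index', add_mul]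

theorem eweight_tripleExpansion (hw : w ≠ 0) {e₀ e₁ e₂ : ℂ} (h₀ : e₀ ≠ 0) (h₁ : e₁ ≠ 0)
    (h₂ : e₂ ≠ 0) : eweight (tripleExpansion w e₀ e₁ e₂) = 3 := by
  rw [eweight, support_tripleExpansion hw h₀ h₁ h₂, Finset.card_insert_of_notMem,
    Finset.card_pair] <;> simp <;> omega

theorem mvalue_pair (τ c d : ℂ) (m n : ℕ) :
    mvalue τ {(c, m), (d, n)} = c * τ ^ m + d * τ ^ n := by
  simp [mvalue]

end Expansion

def HasNonoptimalWNAF (τ : ℂ) (w : ℕ) (D : Set ℂ) : Prop :=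
  ∃ z ∈ Ztau τ, ∃ η : ℕ →₀ ℂ,
    IsExpansion D η ∧ IsWNAF w η ∧ evalue τ η = z ∧
    ∃ μ : Multiset (ℂ × ℕ), IsMultiExpansion D μ ∧ mvalue τ μ = z ∧
      Multiset.card μ < eweight η

theorem hasNonoptimalWNAF_of_value_eq {τ : ℂ} {w : ℕ} (hw : w ≠ 0) {D : Set ℂ} (h0 : 0 ∈ D)
    {e₀ e₁ e₂ c d : ℂ} (he₀ : e₀ ∈ D) (he₁ : e₁ ∈ D) (he₂ : e₂ ∈ D) (hc : c ∈ D) (hd : d ∈ D)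
    (he₀0 : e₀ ≠ 0) (he₁0 : e₁ ≠ 0) (he₂0 : e₂ ≠ 0) (hc0 : c ≠ 0) (hd0 : d ≠ 0) {m n : ℕ}
    (hval : e₀ + e₁ * τ ^ w + e₂ * τ ^ (2 * w) = c * τ ^ m + d * τ ^ n)
    (hz : c * τ ^ m + d * τ ^ n ∈ Ztau τ) : HasNonoptimalWNAF τ w D := by
  refine ⟨_, hz, tripleExpansion w e₀ e₁ e₂, isExpansion_tripleExpansion hw h0 he₀ he₁ he₂,
    isWNAF_tripleExpansion hw e₀ e₁ e₂, by rw [evalue_tripleExpansion, hval],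
    {(c, m), (d, n)}, ?_, mvalue_pair τ c d m n, ?_⟩
  · intro x hx
    rcases Multiset.mem_cons.1 hx with rfl | hx
    · exact ⟨hc, hc0⟩
    rw [Multiset.mem_singleton.1 hx]
    exact ⟨hd, hd0⟩
  · rw [eweight_tripleExpansion hw he₀0 he₁0 he₂0]
    simp

section Construction

variable {q r : ℤ} {τ : ℂ} {w : ℕ} {D : Set ℂ}

theorem hasNonoptimalWNAF_of_int_eq (hτ : τ ^ 2 = -q) (him : τ.im ≠ 0) (hq : 0 < q)
    (hw : w ≠ 0) (hτw : τ ^ (w - 1) = r) (hD : IsMinNormDigitSet τ w D)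
    {A B y C E F : ℤ} (hA : ¬ q ∣ A) (hA2 : 4 * A ^ 2 < (q * r) ^ 2)
    (hC : ¬ q ∣ C) (hC2 : 4 * C ^ 2 < (q * r) ^ 2) (hE : ¬ q ∣ E) (hE2 : 4 * E ^ 2 < (q * r) ^ 2)
    (hB : B ≠ 0) (he₁ : (B : ℂ) + y * τ ∈ D) (hd : (F : ℂ) + B * τ ∈ D)
    (hid : A - q * r * y - q * r ^ 2 * C = E + r * F) :
    HasNonoptimalWNAF τ w D := by
  have hτw' := pow_eq_mul_self_of_pow_pred_eq hw hτw
  have mem {x : ℤ} (hx : ¬ q ∣ x) (hx2 : 4 * x ^ 2 < (q * r) ^ 2) : (x : ℂ) ∈ D :=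
    intCast_mem_digitSet hτ him hq hτw' hD hx hx2
  have cast_ne_zero {x : ℤ} (hx : ¬ q ∣ x) : (x : ℂ) ≠ 0 := by
    exact_mod_cast fun h : x = 0 => hx (h ▸ dvd_zero q)
  refine hasNonoptimalWNAF_of_value_eq hw hD.2.1 (mem hA hA2) he₁ (mem hC hC2) (mem hE hE2) hd
    (cast_ne_zero hA) ?_ (cast_ne_zero hC) (cast_ne_zero hE) ?_ (m := 0) (n := w - 1) ?_ ?_
  · exact fun h => hB ((Ztau.intCast_add_mul_eq_zero him).1 h).1
  · exact fun h => hB ((Ztau.intCast_add_mul_eq_zero him).1 h).2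
  · rw [hτw', mul_comm 2 w, pow_mul, hτw', hτw, mul_pow, hτ]
    have : ((A - q * r * y - q * r ^ 2 * C : ℤ) : ℂ) = (E + r * F : ℤ) := by rw [hid]
    push_cast at this
    linear_combination this + (y * r : ℂ) * hτ
  · exact ⟨E + r * F, r * B, by rw [hτw]; push_cast; ring⟩

end Construction

section Cases

variable {q : ℤ} {τ : ℂ} {w : ℕ} {D : Set ℂ}

theorem hasNonoptimalWNAF_of_odd (hτ : τ ^ 2 = -q) (him : τ.im ≠ 0) (hq : 2 ≤ q) (hqo : Odd q)
    (hw : w ≠ 0) {ε S : ℤ} (hε : IsUnit ε) (hτw : τ ^ (w - 1) = (ε * S : ℤ))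
    (hD : IsMinNormDigitSet τ w D) (hqS : q ∣ S) (hS : Odd S) (hS0 : 0 < S) :
    HasNonoptimalWNAF τ w D := by
  obtain ⟨J, hJ⟩ := hqo
  obtain ⟨L, hL⟩ := hS
  have hSq : q ≤ S := Int.le_of_dvd hS0 hqS
  have hq1 := Int.not_dvd_one_of_two_le hq
  have hq3 : 3 ≤ q := by omega
  have hqS3 : 3 * S ≤ q * S := mul_le_mul_of_nonneg_right hq3 hS0.le
  have hqSL : q * S = 2 * (q * L) + q := by rw [hL]; ring
  have hqr : (q * (ε * S)) ^ 2 = (q * S) ^ 2 := by rw [mul_left_comm, Int.isUnit_mul_sq hε]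
  have bound {x : ℤ} (h₁ : -(q * S) < 2 * x) (h₂ : 2 * x < q * S) :
      4 * x ^ 2 < (q * (ε * S)) ^ 2 :=
    hqr ▸ Int.four_mul_sq_lt_sq h₁ h₂
  have hτw' := pow_eq_mul_self_of_pow_pred_eq hw hτw
  have hA : ¬ q ∣ S + 1 :=
    Int.not_dvd_of_dvd_sub (by rwa [add_sub_cancel_right]) one_ne_zero (by rw [abs_one]; omega)
  have hE : ¬ q ∣ 1 - S * J :=
    Int.not_dvd_of_dvd_sub (by rw [sub_sub_cancel_left]; exact (hqS.mul_right J).neg_right)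
      one_ne_zero (by rw [abs_one]; omega)
  have hF : ¬ q ∣ -(q * L + J) :=
    Int.not_dvd_of_dvd_sub (y := -J) ⟨-L, by ring⟩ (by omega)
      (by rw [abs_neg, abs_of_pos] <;> omega)
  have he₁ : (1 : ℤ) + (ε * -L : ℤ) * τ ∈ D :=
    mem_digitSet_of_lt hτ him (by omega) hτw' hD hq1 (bound (by linarith) (by linarith))
      (by rw [Int.isUnit_mul_sq hε, Int.isUnit_mul_sq hε]; nlinarith)
  have hd : ((ε * -(q * L + J) : ℤ) : ℂ) + (1 : ℤ) * τ ∈ D :=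
    mem_digitSet_of_lt hτ him (by omega) hτw' hD (by rwa [hε.dvd_mul_left])
      (by rw [Int.isUnit_mul_sq hε]; exact bound (by linarith) (by linarith))
      (by rw [Int.isUnit_mul_sq hε]; nlinarith)
  exact hasNonoptimalWNAF_of_int_eq hτ him (by omega) hw hτw hD
    hA (bound (by linarith) (by linarith)) hq1 (bound (by linarith) (by linarith))
    hE (bound (by nlinarith) (by nlinarith)) one_ne_zero he₁ hd
    (by linear_combination (2 * q * S * L + S * J - q * S ^ 2) * Int.isUnit_sq hε -
      S * hJ - q * S * hL)

theorem exists_tie_digits (hτ : τ ^ 2 = -q) (him : τ.im ≠ 0) (hq : 2 ≤ q) (hw : w ≠ 0)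
    {ε T : ℤ} (hε : IsUnit ε) (hτw : τ ^ (w - 1) = (ε * (2 * T) : ℤ))
    (hD : IsMinNormDigitSet τ w D) (hqT : q ∣ 2 * T) (hT : 0 < T) :
    ∃ B δ : ℤ, IsUnit B ∧ IsUnit δ ∧
      (B : ℂ) + (δ * T : ℤ) * τ ∈ D ∧ ((δ * (q * T - 1) : ℤ) : ℂ) + B * τ ∈ D := by
  have hτw' := pow_eq_mul_self_of_pow_pred_eq hw hτw
  have hq1 := Int.not_dvd_one_of_two_le hq
  have hqr : (q * (ε * (2 * T))) ^ 2 = (2 * q * T) ^ 2 := by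
    rw [mul_left_comm, Int.isUnit_mul_sq hε]; ring
  have tie {x : ℤ} (hx : ¬ q ∣ x) (hx2 : 4 * x ^ 2 < (2 * q * T) ^ 2) :
      (x : ℂ) + T * τ ∈ D ∨ (x : ℂ) + (-T : ℤ) * τ ∈ D :=
    mem_digitSet_or_of_eq hτ him (by omega) hτw' hD hx (hqr ▸ hx2)
      (by rw [Int.isUnit_mul_sq hε]; ring)
  rcases lt_or_eq_of_le (show 1 ≤ T by omega) with hT2 | rfl
  · obtain ⟨δ, hδ, hmem⟩ : ∃ δ : ℤ, IsUnit δ ∧ (1 : ℂ) + (δ * T : ℤ) * τ ∈ D := by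
      rcases tie hq1 (by nlinarith [mul_le_mul hq hT2.le zero_le_one (by omega)]) with h | h
      exacts [⟨1, isUnit_one, by simpa using h⟩, ⟨-1, isUnit_one.neg, by simpa using h⟩]
    have hF : ¬ q ∣ q * T - 1 :=
      Int.not_dvd_of_dvd_sub (y := -1) ⟨T, by ring⟩ (by simp) (by simp; omega)
    refine ⟨1, δ, isUnit_one, hδ, by simpa using hmem, ?_⟩
    exact mem_digitSet_of_lt hτ him (by omega) hτw' hD (by rwa [hδ.dvd_mul_left])
      (by rw [hqr, Int.isUnit_mul_sq hδ]
          exact Int.four_mul_sq_lt_sq (by nlinarith) (by nlinarith))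
      (by rw [Int.isUnit_mul_sq hε]; nlinarith)
  · -- `q = 2`: which of `1 ± τ` and `-1 ± τ` lie in `D` depends on how `D` breaks ties
    obtain rfl : q = 2 := le_antisymm (by simpa using Int.le_of_dvd two_pos hqT) hq
    rcases tie hq1 (by norm_num) with h₁ | h₁
    · exact ⟨1, 1, isUnit_one, isUnit_one, by simpa using h₁, by simpa using h₁⟩
    rcases tie (x := -1) (by decide) (by norm_num) with h₂ | h₂
    · exact ⟨1, -1, isUnit_one, isUnit_one.neg, by simpa using h₁, by simpa using h₂⟩
    · exact ⟨-1, -1, isUnit_one.neg, isUnit_one.neg, by simpa using h₂, by simpa using h₂⟩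

theorem hasNonoptimalWNAF_of_even (hτ : τ ^ 2 = -q) (him : τ.im ≠ 0) (hq : 2 ≤ q)
    (hqe : Even q) (hw : w ≠ 0) {ε S : ℤ} (hε : IsUnit ε) (hτw : τ ^ (w - 1) = (ε * S : ℤ))
    (hD : IsMinNormDigitSet τ w D) (hqS : q ∣ S) (hS0 : 0 < S) : HasNonoptimalWNAF τ w D := by
  obtain ⟨T, rfl⟩ := (even_iff_two_dvd.1 hqe).trans hqS
  obtain ⟨B, δ, hB, hδ, he₁, hd⟩ := exists_tie_digits hτ him hq hw hε hτw hD hqS (by omega)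
  have hq1 := Int.not_dvd_one_of_two_le hq
  have hqT : 2 ≤ q * T := by nlinarith [show 1 ≤ T by omega]
  have hqr : (q * (ε * (2 * T))) ^ 2 = (2 * q * T) ^ 2 := by
    rw [mul_left_comm, Int.isUnit_mul_sq hε]; ring
  have bound {x : ℤ} (h₁ : -(2 * q * T) < 2 * x) (h₂ : 2 * x < 2 * q * T) :
      4 * x ^ 2 < (q * (ε * (2 * T))) ^ 2 :=
    hqr ▸ Int.four_mul_sq_lt_sq h₁ h₂
  have hu := hδ.mul hε
  have hA : ¬ q ∣ δ * ε * (1 - 2 * T) := by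
    rw [hu.dvd_mul_left]
    exact Int.not_dvd_of_dvd_sub (by rw [sub_sub_cancel_left]; exact hqS.neg_right) one_ne_zero
      (by rw [abs_one]; omega)
  have hE : ¬ q ∣ δ * ε := fun h => hq1 (h.trans hu.dvd)
  have hE2 : 4 * (δ * ε) ^ 2 < (q * (ε * (2 * T))) ^ 2 := by
    simpa [Int.isUnit_sq hu] using bound (x := 1) (by linarith) (by linarith)
  exact hasNonoptimalWNAF_of_int_eq hτ him (by omega) hw hτw hD hA
    (by rw [Int.isUnit_mul_sq hu]; exact bound (by nlinarith) (by nlinarith))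
    (by rwa [dvd_neg]) (by rwa [neg_sq]) hE hE2 hB.ne_zero he₁ hd
    (by linear_combination 4 * q * δ * ε * T ^ 2 * Int.isUnit_sq hε)

end Cases

theorem wnaf_nonoptimal_p0_w_odd_general (p q : ℤ) (τ : ℂ)
    (hp : p = 0) (hq : 2 ≤ q)
    (hroot : τ ^ 2 - (p : ℂ) * τ + (q : ℂ) = 0)
    (him : τ.im ≠ 0)
    (w : ℕ) (hw : 3 ≤ w) (hwodd : Odd w)
    (D : Set ℂ) (hD : IsMinNormDigitSet τ w D) :
    ∃ z ∈ Ztau τ, ∃ η : ℕ →₀ ℂ,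
      IsExpansion D η ∧ IsWNAF w η ∧ evalue τ η = z ∧
      ∃ μ : Multiset (ℂ × ℕ), IsMultiExpansion D μ ∧ mvalue τ μ = z ∧
        Multiset.card μ < eweight η := by
  subst hp
  have hτ : τ ^ 2 = -q := by linear_combination (by simpa using hroot : τ ^ 2 + q = 0)
  obtain ⟨k, rfl⟩ := hwodd
  have hτw : τ ^ (2 * k + 1 - 1) = (((-1) ^ k * q ^ k : ℤ) : ℂ) := by
    rw [Nat.add_sub_cancel, pow_mul, hτ]; push_cast; ring
  have hε : IsUnit ((-1 : ℤ) ^ k) := isUnit_one.neg.pow k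
  have hqS : q ∣ q ^ k := dvd_pow_self q (by omega)
  have hS0 : 0 < q ^ k := by positivity
  rcases Int.even_or_odd q with hqe | hqo
  · exact hasNonoptimalWNAF_of_even hτ him hq hqe (by omega) hε hτw hD hqS hS0
  · exact hasNonoptimalWNAF_of_odd hτ him hq hqo (by omega) hε hτw hD hqS hqo.pow hS0

/-- Non-optimality for `p = 0`, `q ≥ 2` and odd `w ≥ 3`: some element of
`ℤ[τ]` has a `w`-NAF-expansion which is beaten by a multi-expansion. -/
theorem wnaf_nonoptimal_p0_w_odd (p q : ℤ) (τ : ℂ)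
    (hp : p = 0) (hq : 2 ≤ q)
    (hpq : p ^ 2 < 4 * q)
    (hroot : τ ^ 2 - (p : ℂ) * τ + (q : ℂ) = 0)
    (him : τ.im ≠ 0)
    (w : ℕ) (hw : 3 ≤ w) (hwodd : Odd w)
    (D : Set ℂ) (hD : IsMinNormDigitSet τ w D) :
    ∃ z ∈ Ztau τ, ∃ η : ℕ →₀ ℂ,
      IsExpansion D η ∧ IsWNAF w η ∧ evalue τ η = z ∧
      ∃ μ : Multiset (ℂ × ℕ), IsMultiExpansion D μ ∧ mvalue τ μ = z ∧
        Multiset.card μ < eweight η :=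
  wnaf_nonoptimal_p0_w_odd_general p q τ hp hq hroot him w hw hwodd D hD
end
end
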